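/- arXiv:2407.01745 — 6 statements merged into one kernel-verified Lean document; each statement's English description precedes it below -/
import Mathlib

section
/- (Wendroff's inequality, a two-dimensional Gronwall inequality.) Let c ≥ 0 and let u, v : [0,X] × [0,Y] → ℝ be continuous nonnegative functions such that u(x,y) ≤ c + ∫₀^y ∫₀^x v(r,s) u(r,s) dr ds for all (x,y) ∈ [0,X] × [0,Y]. Then u(x,y) ≤ c · exp(∫₀^y ∫₀^x v(r,s) dr ds) for all (x,y) ∈ [0,X] × [0,Y]. -/
open MeasureTheory Set

lemma wendroff_aux (X Y c : ℝ) (hc : 0 ≤ c)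
    (u v : ℝ × ℝ → ℝ) (hu : Continuous u) (hv : Continuous v)
    (hu0 : ∀ p, 0 ≤ u p) (hv0 : ∀ p, 0 ≤ v p)
    (hineq : ∀ x ∈ Icc (0:ℝ) X, ∀ y ∈ Icc (0:ℝ) Y,
      u (x, y) ≤ c + ∫ s in (0:ℝ)..y, ∫ r in (0:ℝ)..x, v (r, s) * u (r, s)) :
    ∀ x ∈ Icc (0:ℝ) X, ∀ y ∈ Icc (0:ℝ) Y,
      u (x, y) ≤ c * Real.exp (∫ s in (0:ℝ)..y, ∫ r in (0:ℝ)..x, v (r, s)) := by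
  intro x hx y hy
  have hx0 : (0:ℝ) ≤ x := hx.1
  have hy0 : (0:ℝ) ≤ y := hy.1
  set K : ℝ → ℝ := fun s => ∫ r in (0:ℝ)..x, v (r, s) with hKdef
  set g : ℝ → ℝ := fun s => ∫ r in (0:ℝ)..x, v (r, s) * u (r, s) with hgdef
  have huswap : Continuous fun p : ℝ × ℝ => u p.swap := hu.comp continuous_swap
  have hvswap : Continuous fun p : ℝ × ℝ => v p.swap := hv.comp continuous_swap
  have hKc : Continuous K := by
    apply intervalIntegral.continuous_parametric_intervalIntegral_of_continuous'
      (f := fun s r => v (r, s)) (μ := volume)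
    exact hvswap
  have hgc : Continuous g := by
    apply intervalIntegral.continuous_parametric_intervalIntegral_of_continuous'
      (f := fun s r => v (r, s) * u (r, s)) (μ := volume)
    exact hvswap.mul huswap
  -- inner-integral continuity in the parameter, for arbitrary upper bound r
  have hinner : ∀ r : ℝ, Continuous fun s => ∫ ρ in (0:ℝ)..r, v (ρ, s) * u (ρ, s) := by
    intro r
    apply intervalIntegral.continuous_parametric_intervalIntegral_of_continuous'
      (f := fun s ρ => v (ρ, s) * u (ρ, s)) (μ := volume)
    exact hvswap.mul huswap
  set f : ℝ → ℝ := fun t => c + ∫ s in (0:ℝ)..t, g s with hfdef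
  have hle_f : ∀ t ∈ Icc (0:ℝ) Y, ∀ r ∈ Icc (0:ℝ) x, u (r, t) ≤ f t := by
    intro t ht r hr
    have h1 := hineq r ⟨hr.1, hr.2.trans hx.2⟩ t ht
    have h2 : (∫ s in (0:ℝ)..t, ∫ ρ in (0:ℝ)..r, v (ρ, s) * u (ρ, s))
        ≤ ∫ s in (0:ℝ)..t, g s := by
      apply intervalIntegral.integral_mono_on ht.1
        ((hinner r).intervalIntegrable 0 t) (hgc.intervalIntegrable 0 t)
      intro s _
      apply intervalIntegral.integral_mono_interval le_rfl hr.1 hr.2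
      · exact Filter.Eventually.of_forall fun ρ => mul_nonneg (hv0 _) (hu0 _)
      · exact (by fun_prop : Continuous fun ρ => v (ρ, s) * u (ρ, s)).intervalIntegrable 0 x
    calc u (r, t) ≤ c + ∫ s in (0:ℝ)..t, ∫ ρ in (0:ℝ)..r, v (ρ, s) * u (ρ, s) := h1
      _ ≤ f t := by simp only [hfdef]; linarith
  have hgK : ∀ t ∈ Icc (0:ℝ) Y, g t ≤ K t * f t := by
    intro t ht
    have h1 : g t ≤ ∫ r in (0:ℝ)..x, v (r, t) * f t := by
      apply intervalIntegral.integral_mono_on hx0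
        ((by fun_prop : Continuous fun r => v (r, t) * u (r, t)).intervalIntegrable 0 x)
        ((by fun_prop : Continuous fun r => v (r, t) * f t).intervalIntegrable 0 x)
      intro r hr
      exact mul_le_mul_of_nonneg_left (hle_f t ht r hr) (hv0 _)
    calc g t ≤ ∫ r in (0:ℝ)..x, v (r, t) * f t := h1
      _ = K t * f t := intervalIntegral.integral_mul_const _ _
  have hfd : ∀ t, HasDerivAt f (g t) t := fun t =>
    ((hgc.integral_hasStrictDerivAt 0 t).hasDerivAt).const_add c
  set V : ℝ → ℝ := fun t => ∫ s in (0:ℝ)..t, K s with hVdef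
  have hVd : ∀ t, HasDerivAt V (K t) t := fun t =>
    (hKc.integral_hasStrictDerivAt 0 t).hasDerivAt
  set E : ℝ → ℝ := fun t => Real.exp (-V t) with hEdef
  have hEd : ∀ t, HasDerivAt E (-K t * E t) t := by
    intro t
    have := ((hVd t).neg).exp
    simpa [hEdef, mul_comm] using this
  set h : ℝ → ℝ := fun t => f t * E t with hhdef
  have hhd : ∀ t, HasDerivAt h (g t * E t + f t * (-K t * E t)) t :=
    fun t => (hfd t).mul (hEd t)
  have hanti : AntitoneOn h (Icc (0:ℝ) Y) := by
    apply antitoneOn_of_deriv_nonpos (convex_Icc 0 Y)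
    · exact fun t _ => (hhd t).differentiableAt.continuousAt.continuousWithinAt
    · exact fun t _ => (hhd t).differentiableAt.differentiableWithinAt
    · intro t ht
      rw [interior_Icc] at ht
      rw [(hhd t).deriv]
      have h1 := hgK t ⟨ht.1.le, ht.2.le⟩
      have h2 : 0 < E t := Real.exp_pos _
      nlinarith
  have hY0 : (0:ℝ) ≤ Y := hy0.trans hy.2
  have hle : h y ≤ h 0 := hanti ⟨le_rfl, hY0⟩ hy hy0
  have h0 : h 0 = c := by
    simp [hhdef, hfdef, hEdef, hVdef]
  rw [h0] at hle
  -- hle : f y * E y ≤ c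
  have hfy : f y ≤ c * Real.exp (V y) := by
    have hexp : Real.exp (-V y) * Real.exp (V y) = 1 := by
      rw [← Real.exp_add]; simp
    calc f y = f y * Real.exp (-V y) * Real.exp (V y) := by
          rw [mul_assoc, hexp, mul_one]
      _ ≤ c * Real.exp (V y) :=
          mul_le_mul_of_nonneg_right hle (Real.exp_pos _).le
  calc u (x, y) ≤ c + ∫ s in (0:ℝ)..y, g s := hineq x hx y hy
    _ = f y := (hfdef ▸ rfl)
    _ ≤ c * Real.exp (V y) := hfy
    _ = c * Real.exp (∫ s in (0:ℝ)..y, K s) := by rw [hVdef]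

/-- Wendroff's inequality: a two-dimensional Gronwall inequality. -/
theorem wendroff_inequality
    (X Y c : ℝ) (hX : 0 < X) (hY : 0 < Y) (hc : 0 ≤ c)
    (u v : ℝ × ℝ → ℝ)
    (hu_cont : ContinuousOn u (Icc (0:ℝ) X ×ˢ Icc (0:ℝ) Y))
    (hv_cont : ContinuousOn v (Icc (0:ℝ) X ×ˢ Icc (0:ℝ) Y))
    (hu_nonneg : ∀ p ∈ Icc (0:ℝ) X ×ˢ Icc (0:ℝ) Y, 0 ≤ u p)
    (hv_nonneg : ∀ p ∈ Icc (0:ℝ) X ×ˢ Icc (0:ℝ) Y, 0 ≤ v p)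
    (hineq : ∀ x ∈ Icc (0:ℝ) X, ∀ y ∈ Icc (0:ℝ) Y,
      u (x, y) ≤ c + ∫ s in (0:ℝ)..y, ∫ r in (0:ℝ)..x, v (r, s) * u (r, s)) :
    ∀ x ∈ Icc (0:ℝ) X, ∀ y ∈ Icc (0:ℝ) Y,
      u (x, y) ≤ c * Real.exp (∫ s in (0:ℝ)..y, ∫ r in (0:ℝ)..x, v (r, s)) := by
  -- retract ℝ² onto the rectangle
  set q : ℝ × ℝ → ℝ × ℝ := fun p => (min (max p.1 0) X, min (max p.2 0) Y) with hqdef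
  have hqc : Continuous q := by fun_prop
  have hqmem : ∀ p, q p ∈ Icc (0:ℝ) X ×ˢ Icc (0:ℝ) Y := by
    intro p
    refine ⟨⟨le_min (le_max_right _ _) hX.le, min_le_right _ _⟩,
      ⟨le_min (le_max_right _ _) hY.le, min_le_right _ _⟩⟩
  have hqid : ∀ p ∈ Icc (0:ℝ) X ×ˢ Icc (0:ℝ) Y, q p = p := by
    rintro ⟨a, b⟩ ⟨⟨ha0, haX⟩, ⟨hb0, hbY⟩⟩
    simp only [hqdef, Prod.mk.injEq]
    rw [max_eq_left ha0, min_eq_left haX, max_eq_left hb0, min_eq_left hbY]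
    exact ⟨rfl, rfl⟩
  set U : ℝ × ℝ → ℝ := fun p => u (q p) with hUdef
  set W : ℝ × ℝ → ℝ := fun p => v (q p) with hWdef
  have hUc : Continuous U := hu_cont.comp_continuous hqc hqmem
  have hWc : Continuous W := hv_cont.comp_continuous hqc hqmem
  have hU0 : ∀ p, 0 ≤ U p := fun p => hu_nonneg _ (hqmem p)
  have hW0 : ∀ p, 0 ≤ W p := fun p => hv_nonneg _ (hqmem p)
  have heq : ∀ x ∈ Icc (0:ℝ) X, ∀ y ∈ Icc (0:ℝ) Y, ∀ s ∈ Icc (0:ℝ) y,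
      (∫ r in (0:ℝ)..x, W (r, s) * U (r, s)) = ∫ r in (0:ℝ)..x, v (r, s) * u (r, s) := by
    intro x hx y hy s hs
    apply intervalIntegral.integral_congr
    intro r hr
    rw [uIcc_of_le hx.1] at hr
    have hmem : (r, s) ∈ Icc (0:ℝ) X ×ˢ Icc (0:ℝ) Y :=
      ⟨⟨hr.1, hr.2.trans hx.2⟩, ⟨hs.1, hs.2.trans hy.2⟩⟩
    simp only [hUdef, hWdef, hqid _ hmem]
  have heqv : ∀ x ∈ Icc (0:ℝ) X, ∀ y ∈ Icc (0:ℝ) Y, ∀ s ∈ Icc (0:ℝ) y,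
      (∫ r in (0:ℝ)..x, W (r, s)) = ∫ r in (0:ℝ)..x, v (r, s) := by
    intro x hx y hy s hs
    apply intervalIntegral.integral_congr
    intro r hr
    rw [uIcc_of_le hx.1] at hr
    have hmem : (r, s) ∈ Icc (0:ℝ) X ×ˢ Icc (0:ℝ) Y :=
      ⟨⟨hr.1, hr.2.trans hx.2⟩, ⟨hs.1, hs.2.trans hy.2⟩⟩
    simp only [hWdef, hqid _ hmem]
  have hineq' : ∀ x ∈ Icc (0:ℝ) X, ∀ y ∈ Icc (0:ℝ) Y,
      U (x, y) ≤ c + ∫ s in (0:ℝ)..y, ∫ r in (0:ℝ)..x, W (r, s) * U (r, s) := by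
    intro x hx y hy
    have hUxy : U (x, y) = u (x, y) := by
      simp only [hUdef, hqid _ (show ((x:ℝ), y) ∈ _ from ⟨hx, hy⟩)]
    have houter : (∫ s in (0:ℝ)..y, ∫ r in (0:ℝ)..x, W (r, s) * U (r, s))
        = ∫ s in (0:ℝ)..y, ∫ r in (0:ℝ)..x, v (r, s) * u (r, s) := by
      apply intervalIntegral.integral_congr
      intro s hs
      rw [uIcc_of_le hy.1] at hs
      exact heq x hx y hy s hs
    rw [hUxy, houter]
    exact hineq x hx y hy
  intro x hx y hy
  have hmain := wendroff_aux X Y c hc U W hUc hWc hU0 hW0 hineq' x hx y hy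
  have hUxy : U (x, y) = u (x, y) := by
    simp only [hUdef, hqid _ (show ((x:ℝ), y) ∈ _ from ⟨hx, hy⟩)]
  have houter : (∫ s in (0:ℝ)..y, ∫ r in (0:ℝ)..x, W (r, s))
      = ∫ s in (0:ℝ)..y, ∫ r in (0:ℝ)..x, v (r, s) := by
    apply intervalIntegral.integral_congr
    intro s hs
    rw [uIcc_of_le hy.1] at hs
    exact heqv x hx y hy s hs
  rw [hUxy, houter] at hmain
  exact hmain
end

section
/- Let λ̄ > 0 and let λ : [0,1] → ℝ be continuous with sup |λ| ≤ λ̄. On the domain D = {(ξ,η) ∈ ℝ² : 0 ≤ η ≤ ξ and ξ + η ≤ 2}, the integral equation G(ξ,η) = −(1/4)∫_η^ξ λ(s/2) ds + (1/4)∫_η^ξ ∫₀^η λ((σ−s)/2) · G(σ,s) ds dσ has a unique continuous solution G : D → ℝ, and this solution satisfies |G(ξ,η)| ≤ λ̄·e^{λ̄(ξ+η)} for all (ξ,η) ∈ D; in particular |G(ξ,η)| ≤ λ̄·e^{2λ̄} on D. -/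
/-- The image of the triangle `{0 ≤ y ≤ x ≤ 1}` under `ξ = x + y`, `η = x - y`. -/
def Dtri : Set (ℝ × ℝ) := {p | 0 ≤ p.2 ∧ p.2 ≤ p.1 ∧ p.1 + p.2 ≤ 2}

/-!
The right-hand side `T g` of the equation is an affine Volterra operator: its linear part
integrates `λ · g` over `[η, ξ] × [0, η]`, where `σ + s ≤ ξ + η`. So `|g - h| ≤ φ(ξ + η)` on `D`
with `φ` monotone gives `|T g - T h| ≤ (λ̄/4) ∫₀^{ξ+η} φ`, and by induction
`|Tⁿ g - Tⁿ h| ≤ ‖g - h‖ (λ̄(ξ+η)/4)ⁿ / n!`. Hence some iterate of `T` is a contraction, and its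
fixed point is the unique continuous solution. The same estimate with `φ(u) = λ̄² e^{λ̄u}` shows
that `T` preserves the closed set `{g | |g| ≤ λ̄ e^{λ̄(ξ+η)} on D}`, which therefore contains
the fixed point.
-/

open MeasureTheory intervalIntegral Set Filter BoundedContinuousFunction

theorem ContractingWith.fixedPoint_mem_of_mapsTo {α : Type*} [MetricSpace α] [Nonempty α]
    [CompleteSpace α] {K : NNReal} {f : α → α} (hf : ContractingWith K f) {s : Set α}
    (hs : IsClosed s) (hfs : MapsTo f s s) {x : α} (hx : x ∈ s) : fixedPoint f hf ∈ s :=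
  hs.mem_of_tendsto (hf.tendsto_iterate_fixedPoint x)
    (Eventually.of_forall fun n ↦ hfs.iterate n hx)

theorem exists_contractingWith_iterate_of_dist_le_pow_div_factorial {α : Type*}
    [MetricSpace α] {f : α → α} (c : ℝ)
    (hf : ∀ n x y, dist (f^[n] x) (f^[n] y) ≤ c ^ n / n.factorial * dist x y) :
    ∃ m, ContractingWith (1 / 2) f^[m] := by
  obtain ⟨m, hm⟩ := ((FloorSemiring.tendsto_pow_div_factorial_atTop c).eventually
    (gt_mem_nhds (by norm_num : (0 : ℝ) < 1 / 2))).exists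
  refine ⟨m, by norm_num, LipschitzWith.of_dist_le_mul fun x y ↦ (hf m x y).trans ?_⟩
  rw [NNReal.coe_div, NNReal.coe_one, NNReal.coe_ofNat]
  gcongr

theorem continuous_intervalIntegral_of_continuous {X E : Type*} [TopologicalSpace X]
    [NormedAddCommGroup E] [NormedSpace ℝ E] {f : X → ℝ → E} (hf : Continuous f.uncurry)
    {a b : X → ℝ} (ha : Continuous a) (hb : Continuous b) :
    Continuous fun x ↦ ∫ t in a x..b x, f x t := by
  have hint : ∀ x c d, IntervalIntegrable (f x) volume c d := fun x _ _ ↦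
    (hf.comp (Continuous.prodMk_right x)).intervalIntegrable _ _
  have hprim : ∀ {c : X → ℝ}, Continuous c → Continuous fun x ↦ ∫ t in (0 : ℝ)..c x, f x t :=
    fun hc ↦ continuous_parametric_intervalIntegral_of_continuous (μ := volume) hf hc
  exact ((hprim hb).sub (hprim ha)).congr fun x ↦
    integral_interval_sub_left (hint x _ _) (hint x _ _)

theorem mul_integral_mul_pow_div_factorial (a t : ℝ) (n : ℕ) :
    a * ∫ u in (0 : ℝ)..t, (a * u) ^ n / n.factorial =
      (a * t) ^ (n + 1) / (n + 1).factorial := by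
  rw [mul_integral_comp_mul_left (f := fun x ↦ x ^ n / n.factorial),
    intervalIntegral.integral_div, integral_pow, Nat.factorial_succ]
  push_cast
  field_simp
  ring

theorem mul_integral_exp_mul (a t : ℝ) :
    a * ∫ u in (0 : ℝ)..t, Real.exp (a * u) = Real.exp (a * t) - 1 := by
  rw [mul_integral_comp_mul_left (f := Real.exp), integral_exp, mul_zero, Real.exp_zero]

theorem BoundedContinuousFunction.isClosed_setOf_abs_le {α : Type*} [TopologicalSpace α]
    (s : Set α) (B : α → ℝ) : IsClosed {g : α →ᵇ ℝ | ∀ q ∈ s, |g q| ≤ B q} := by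
  simp only [ofPred_forall]
  exact isClosed_biInter fun q _ ↦ isClosed_le (continuous_eval_const q).abs continuous_const

namespace BacksteppingKernel

noncomputable section

lemma isCompact_Dtri : IsCompact Dtri := by
  refine (isCompact_Icc (a := ((0 : ℝ), (0 : ℝ))) (b := (2, 2))).of_isClosed_subset ?_ ?_
  · exact (isClosed_le continuous_const continuous_snd).inter
      ((isClosed_le continuous_snd continuous_fst).inter
        (isClosed_le (continuous_fst.add continuous_snd) continuous_const))
  · rintro p ⟨h0, h1, h2⟩
    exact ⟨⟨by linarith, h0⟩, ⟨by linarith, by linarith⟩⟩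

lemma mk_mem_Dtri {p : ℝ × ℝ} (hp : p ∈ Dtri) {σ s : ℝ} (hσ : σ ∈ Icc p.2 p.1)
    (hs : s ∈ Icc 0 p.2) : (σ, s) ∈ Dtri :=
  ⟨hs.1, hs.2.trans hσ.1, by dsimp only; linarith [hp.2.2, hσ.2, hs.2]⟩

lemma half_sub_mem_Icc {q : ℝ × ℝ} (hq : q ∈ Dtri) : (q.1 - q.2) / 2 ∈ Icc (0 : ℝ) 1 := by
  obtain ⟨h0, h1, h2⟩ := hq
  constructor <;> linarith

/-- Clamps `η` to `[0, 1]`, then `ξ` to `[η, 2 - η]`. Composing with this retraction turns a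
function continuous on `Dtri` into a bounded continuous function on the plane, so the fixed-point
argument can run in the Banach space `(ℝ × ℝ) →ᵇ ℝ`. -/
def retractDtri (p : ℝ × ℝ) : ℝ × ℝ :=
  (max (max 0 (min p.2 1)) (min p.1 (2 - max 0 (min p.2 1))), max 0 (min p.2 1))

lemma continuous_retractDtri : Continuous retractDtri := by unfold retractDtri; fun_prop

lemma retractDtri_mem (p : ℝ × ℝ) : retractDtri p ∈ Dtri := by
  have h0 : 0 ≤ max 0 (min p.2 1) := le_max_left _ _
  have h1 : max 0 (min p.2 1) ≤ 1 := max_le zero_le_one (min_le_right _ _)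
  refine ⟨h0, le_max_left _ _, ?_⟩
  dsimp only [retractDtri]
  rcases max_cases (max 0 (min p.2 1)) (min p.1 (2 - max 0 (min p.2 1))) with
    ⟨h, _⟩ | ⟨h, _⟩
  · linarith
  · linarith [min_le_right p.1 (2 - max 0 (min p.2 1))]

lemma retractDtri_of_mem {p : ℝ × ℝ} (hp : p ∈ Dtri) : retractDtri p = p := by
  obtain ⟨h0, h1, h2⟩ := hp
  have hη : max 0 (min p.2 1) = p.2 := by
    rw [min_eq_left (by linarith), max_eq_right h0]
  simp only [retractDtri, hη, min_eq_left (by linarith : p.1 ≤ 2 - p.2), max_eq_right h1]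

def kernelIntegral (k : ℝ × ℝ → ℝ) (p : ℝ × ℝ) : ℝ :=
  ∫ σ in p.2..p.1, ∫ s in (0 : ℝ)..p.2, k (σ, s)

lemma continuous_kernelIntegral {k : ℝ × ℝ → ℝ} (hk : Continuous k) :
    Continuous (kernelIntegral k) := by
  refine continuous_intervalIntegral_of_continuous ?_ continuous_snd continuous_fst
  exact continuous_parametric_intervalIntegral_of_continuous
    (f := fun (x : (ℝ × ℝ) × ℝ) s ↦ k (x.2, s)) (μ := volume) (a₀ := 0) (by fun_prop)
    (by fun_prop)

lemma kernelIntegral_sub {k₁ k₂ : ℝ × ℝ → ℝ} (hk₁ : Continuous k₁) (hk₂ : Continuous k₂)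
    (p : ℝ × ℝ) :
    kernelIntegral k₁ p - kernelIntegral k₂ p = kernelIntegral (fun q ↦ k₁ q - k₂ q) p := by
  have hint : ∀ {k : ℝ × ℝ → ℝ}, Continuous k → ∀ σ,
      IntervalIntegrable (fun s ↦ k (σ, s)) volume 0 p.2 :=
    fun hk σ ↦ (hk.comp (Continuous.prodMk_right σ)).intervalIntegrable _ _
  have hint' : ∀ {k : ℝ × ℝ → ℝ}, Continuous k →
      IntervalIntegrable (fun σ ↦ ∫ s in (0 : ℝ)..p.2, k (σ, s)) volume p.2 p.1 :=
    fun {k} hk ↦ (continuous_parametric_intervalIntegral_of_continuous'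
      (f := fun σ s ↦ k (σ, s)) hk 0 p.2).intervalIntegrable _ _
  simp only [kernelIntegral, ← integral_sub (hint' hk₁) (hint' hk₂),
    ← integral_sub (hint hk₁ _) (hint hk₂ _)]

lemma abs_kernelIntegral_le {k : ℝ × ℝ → ℝ} {φ : ℝ → ℝ} (hφ : MonotoneOn φ (Ici 0))
    (hk : ∀ q ∈ Dtri, |k q| ≤ φ (q.1 + q.2)) {p : ℝ × ℝ} (hp : p ∈ Dtri) :
    |kernelIntegral k p| ≤ ∫ u in (0 : ℝ)..(p.1 + p.2), φ u := by
  obtain ⟨h0, h1, h2⟩ := hp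
  have hφ0 : ∀ u, 0 ≤ u → 0 ≤ φ u := fun u hu ↦ (abs_nonneg _).trans
    ((hk (0, 0) ⟨le_rfl, le_rfl, by norm_num⟩).trans (hφ (by simp) hu (by simpa using hu)))
  have hφi : ∀ a b, 0 ≤ a → 0 ≤ b → IntervalIntegrable φ volume a b := fun a b ha hb ↦
    (hφ.mono fun u hu ↦ le_trans (le_min ha hb) hu.1).intervalIntegrable
  have inner : ∀ σ ∈ Ioc p.2 p.1, ‖∫ s in (0 : ℝ)..p.2, k (σ, s)‖ ≤ φ (σ + p.2) := by
    intro σ hσ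
    refine (intervalIntegral.norm_integral_le_of_norm_le_const (C := φ (σ + p.2))
      fun s hs ↦ ?_).trans ?_
    · rw [uIoc_of_le h0] at hs
      exact (hk _ (mk_mem_Dtri ⟨h0, h1, h2⟩ ⟨hσ.1.le, hσ.2⟩ ⟨hs.1.le, hs.2⟩)).trans
        (hφ (by simp; linarith [hs.1, hσ.1]) (by simp; linarith [hσ.1])
          (by dsimp only; linarith [hs.2]))
    · rw [sub_zero, abs_of_nonneg h0]
      exact mul_le_of_le_one_right (hφ0 _ (by linarith [hσ.1])) (by linarith)
  have hφi' : IntervalIntegrable (fun σ ↦ φ (σ + p.2)) volume p.2 p.1 := by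
    simpa using (hφi (p.2 + p.2) (p.1 + p.2) (by linarith) (by linarith)).comp_add_right p.2
  calc |kernelIntegral k p|
      ≤ ∫ σ in p.2..p.1, φ (σ + p.2) :=
        intervalIntegral.norm_integral_le_of_norm_le h1 (Eventually.of_forall inner) hφi'
    _ = ∫ u in (p.2 + p.2)..(p.1 + p.2), φ u := integral_comp_add_right φ p.2
    _ ≤ ∫ u in (0 : ℝ)..(p.1 + p.2), φ u :=
        integral_mono_interval (by linarith) (by linarith) le_rfl
          (ae_restrict_of_forall_mem measurableSet_Ioc fun u hu ↦ hφ0 u hu.1.le)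
          (hφi 0 _ le_rfl (by linarith))

lemma abs_kernelIntegral_mul_le {lam : ℝ → ℝ} {lb : ℝ} (hlb : ∀ x, |lam x| ≤ lb)
    {g : ℝ × ℝ → ℝ} {φ : ℝ → ℝ} (hφ : MonotoneOn φ (Ici 0))
    (hg : ∀ q ∈ Dtri, |g q| ≤ φ (q.1 + q.2)) {p : ℝ × ℝ} (hp : p ∈ Dtri) :
    |kernelIntegral (fun q ↦ lam ((q.1 - q.2) / 2) * g q) p| ≤
      lb * ∫ u in (0 : ℝ)..(p.1 + p.2), φ u := by
  have hlb0 : 0 ≤ lb := (abs_nonneg _).trans (hlb 0)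
  rw [← intervalIntegral.integral_const_mul]
  refine abs_kernelIntegral_le
    (fun u hu v hv huv ↦ mul_le_mul_of_nonneg_left (hφ hu hv huv) hlb0) (fun q hq ↦ ?_) hp
  rw [abs_mul]
  exact mul_le_mul (hlb _) (hg q hq) (abs_nonneg _) hlb0

def picard (lam : ℝ → ℝ) (g : ℝ × ℝ → ℝ) (p : ℝ × ℝ) : ℝ :=
  -(1 / 4) * (∫ s in p.2..p.1, lam (s / 2)) +
    (1 / 4) * kernelIntegral (fun q ↦ lam ((q.1 - q.2) / 2) * g q) p

lemma continuous_picard {lam : ℝ → ℝ} (hlam : Continuous lam) {g : ℝ × ℝ → ℝ}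
    (hg : Continuous g) : Continuous (picard lam g) :=
  (continuous_const.mul (continuous_intervalIntegral_of_continuous (f := fun _ s ↦ lam (s / 2))
    (by fun_prop) continuous_snd continuous_fst)).add
    (continuous_const.mul (continuous_kernelIntegral (by fun_prop)))

lemma picard_congr {lam₁ lam₂ : ℝ → ℝ} (hlam : EqOn lam₁ lam₂ (Icc 0 1))
    {g₁ g₂ : ℝ × ℝ → ℝ} (hg : EqOn g₁ g₂ Dtri) {p : ℝ × ℝ} (hp : p ∈ Dtri) :
    picard lam₁ g₁ p = picard lam₂ g₂ p := by
  obtain ⟨h0, h1, h2⟩ := hp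
  unfold picard kernelIntegral
  congr 2
  · refine integral_congr fun s hs ↦ hlam ?_
    rw [uIcc_of_le h1] at hs
    constructor <;> linarith [hs.1, hs.2]
  · refine integral_congr fun σ hσ ↦ integral_congr fun s hs ↦ ?_
    rw [uIcc_of_le h1] at hσ
    rw [uIcc_of_le h0] at hs
    have hq := mk_mem_Dtri ⟨h0, h1, h2⟩ hσ hs
    dsimp only
    rw [hlam (half_sub_mem_Icc hq), hg hq]

lemma abs_picard_le {lam : ℝ → ℝ} {lb : ℝ} (hlb : ∀ x, |lam x| ≤ lb) {g : ℝ × ℝ → ℝ}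
    {φ : ℝ → ℝ} (hφ : MonotoneOn φ (Ici 0)) (hg : ∀ q ∈ Dtri, |g q| ≤ φ (q.1 + q.2))
    {p : ℝ × ℝ} (hp : p ∈ Dtri) :
    |picard lam g p| ≤ lb / 2 + lb / 4 * ∫ u in (0 : ℝ)..(p.1 + p.2), φ u := by
  have hlb0 : 0 ≤ lb := (abs_nonneg _).trans (hlb 0)
  have hsource : |∫ s in p.2..p.1, lam (s / 2)| ≤ 2 * lb := by
    refine (intervalIntegral.norm_integral_le_of_norm_le_const (f := fun s ↦ lam (s / 2))
      fun s _ ↦ hlb (s / 2)).trans ?_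
    rw [abs_of_nonneg (by linarith [hp.2.1])]
    nlinarith [hp.1, hp.2.2]
  have hkernel := abs_kernelIntegral_mul_le hlb hφ hg hp
  unfold picard
  refine (abs_add_le _ _).trans ?_
  rw [abs_mul, abs_mul, abs_neg, abs_of_pos (by norm_num : (0 : ℝ) < 1 / 4)]
  linarith

lemma abs_picard_sub_le {lam : ℝ → ℝ} (hlam : Continuous lam) {lb : ℝ}
    (hlb : ∀ x, |lam x| ≤ lb) {g h : ℝ × ℝ → ℝ} (hg : Continuous g) (hh : Continuous h)
    {φ : ℝ → ℝ} (hφ : MonotoneOn φ (Ici 0)) (hgh : ∀ q ∈ Dtri, |g q - h q| ≤ φ (q.1 + q.2))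
    {p : ℝ × ℝ} (hp : p ∈ Dtri) :
    |picard lam g p - picard lam h p| ≤ lb / 4 * ∫ u in (0 : ℝ)..(p.1 + p.2), φ u := by
  have hsub : picard lam g p - picard lam h p =
      1 / 4 * kernelIntegral (fun q ↦ lam ((q.1 - q.2) / 2) * (g q - h q)) p := by
    unfold picard
    rw [add_sub_add_left_eq_sub, ← mul_sub, kernelIntegral_sub (by fun_prop) (by fun_prop)]
    simp only [mul_sub]
  rw [hsub, abs_mul, abs_of_pos (by norm_num : (0 : ℝ) < 1 / 4)]
  linarith [abs_kernelIntegral_mul_le hlb hφ hgh hp]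

def extendDtri (f : ℝ × ℝ → ℝ) (hf : ContinuousOn f Dtri) : (ℝ × ℝ) →ᵇ ℝ :=
  .ofNormedAddCommGroup (f ∘ retractDtri)
    (hf.comp_continuous continuous_retractDtri retractDtri_mem)
    (isCompact_Dtri.exists_bound_of_continuousOn hf).choose
    fun p ↦ (isCompact_Dtri.exists_bound_of_continuousOn hf).choose_spec _ (retractDtri_mem p)

lemma extendDtri_apply (f : ℝ × ℝ → ℝ) (hf : ContinuousOn f Dtri) (p : ℝ × ℝ) :
    extendDtri f hf p = f (retractDtri p) :=
  rfl

lemma extendDtri_of_mem {f : ℝ × ℝ → ℝ} (hf : ContinuousOn f Dtri) {p : ℝ × ℝ}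
    (hp : p ∈ Dtri) : extendDtri f hf p = f p := by
  rw [extendDtri_apply, retractDtri_of_mem hp]

lemma dist_extendDtri_le {f f' : ℝ × ℝ → ℝ} (hf : ContinuousOn f Dtri)
    (hf' : ContinuousOn f' Dtri) {C : ℝ} (h : ∀ q ∈ Dtri, |f q - f' q| ≤ C) :
    dist (extendDtri f hf) (extendDtri f' hf') ≤ C :=
  BoundedContinuousFunction.dist_le_iff_of_nonempty.2 fun p ↦ by
    rw [extendDtri_apply, extendDtri_apply, Real.dist_eq]
    exact h _ (retractDtri_mem p)

def picardOp (lam : ℝ → ℝ) (hlam : Continuous lam) (g : (ℝ × ℝ) →ᵇ ℝ) : (ℝ × ℝ) →ᵇ ℝ :=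
  extendDtri (picard lam g) (continuous_picard hlam g.continuous).continuousOn

section PicardOp

variable {lam : ℝ → ℝ} (hlam : Continuous lam) {lb : ℝ}

lemma picardOp_apply_of_mem (g : (ℝ × ℝ) →ᵇ ℝ) {p : ℝ × ℝ} (hp : p ∈ Dtri) :
    picardOp lam hlam g p = picard lam g p :=
  extendDtri_of_mem _ hp

lemma abs_picardOp_iterate_sub_le (hlb : ∀ x, |lam x| ≤ lb) (g h : (ℝ × ℝ) →ᵇ ℝ) (n : ℕ)
    {q : ℝ × ℝ} (hq : q ∈ Dtri) :
    |(picardOp lam hlam)^[n] g q - (picardOp lam hlam)^[n] h q| ≤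
      dist g h * ((lb / 4 * (q.1 + q.2)) ^ n / n.factorial) := by
  have hlb0 : 0 ≤ lb := (abs_nonneg _).trans (hlb 0)
  induction n generalizing q with
  | zero => simpa [Real.dist_eq] using dist_coe_le_dist (f := g) (g := h) q
  | succ n ih =>
    have hmono : MonotoneOn (fun u ↦ dist g h * ((lb / 4 * u) ^ n / n.factorial)) (Ici 0) :=
      fun u hu v _ huv ↦ by dsimp only; gcongr; exact mul_nonneg (by positivity) hu
    rw [Function.iterate_succ_apply', Function.iterate_succ_apply',
      picardOp_apply_of_mem hlam _ hq, picardOp_apply_of_mem hlam _ hq]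
    refine (abs_picard_sub_le hlam hlb (by fun_prop) (by fun_prop) hmono (fun _ ↦ ih) hq).trans_eq
      ?_
    rw [intervalIntegral.integral_const_mul, mul_left_comm,
      mul_integral_mul_pow_div_factorial]

lemma dist_picardOp_iterate_le (hlb : ∀ x, |lam x| ≤ lb) (n : ℕ) (g h : (ℝ × ℝ) →ᵇ ℝ) :
    dist ((picardOp lam hlam)^[n] g) ((picardOp lam hlam)^[n] h) ≤
      (lb / 2) ^ n / n.factorial * dist g h := by
  have hlb0 : 0 ≤ lb := (abs_nonneg _).trans (hlb 0)
  rcases n with _ | n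
  · simp
  rw [Function.iterate_succ_apply', Function.iterate_succ_apply']
  refine dist_extendDtri_le _ _ fun q hq ↦ ?_
  have hiter := abs_picardOp_iterate_sub_le hlam hlb g h (n + 1) hq
  rw [Function.iterate_succ_apply', Function.iterate_succ_apply',
    picardOp_apply_of_mem hlam _ hq, picardOp_apply_of_mem hlam _ hq] at hiter
  refine hiter.trans ?_
  obtain ⟨h0, h1, h2⟩ := hq
  rw [mul_comm]
  gcongr
  · exact mul_nonneg (by positivity) (by linarith)
  · nlinarith

lemma mapsTo_picardOp (hlb : ∀ x, |lam x| ≤ lb) :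
    MapsTo (picardOp lam hlam) {g | ∀ q ∈ Dtri, |g q| ≤ lb * Real.exp (lb * (q.1 + q.2))}
      {g | ∀ q ∈ Dtri, |g q| ≤ lb * Real.exp (lb * (q.1 + q.2))} := by
  have hlb0 : 0 ≤ lb := (abs_nonneg _).trans (hlb 0)
  intro g hg q hq
  have hmono : MonotoneOn (fun u ↦ lb * Real.exp (lb * u)) (Ici 0) := fun u _ v _ huv ↦ by
    dsimp only; gcongr
  have hbound := abs_picard_le hlb hmono hg hq
  rw [intervalIntegral.integral_const_mul, mul_integral_exp_mul] at hbound
  have hexp : 1 ≤ Real.exp (lb * (q.1 + q.2)) :=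
    Real.one_le_exp (mul_nonneg hlb0 (by linarith [hq.1, hq.2.1]))
  rw [picardOp_apply_of_mem hlam g hq]
  nlinarith

lemma isFixedPt_picardOp_extendDtri {lam₀ : ℝ → ℝ} (hlam₀ : EqOn lam lam₀ (Icc 0 1))
    {G : ℝ × ℝ → ℝ} (hG : ContinuousOn G Dtri) (hsol : ∀ p ∈ Dtri, G p = picard lam₀ G p) :
    Function.IsFixedPt (picardOp lam hlam) (extendDtri G hG) := by
  ext p
  have hp := retractDtri_mem p
  change picard lam (extendDtri G hG) (retractDtri p) = G (retractDtri p)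
  rw [hsol _ hp]
  exact picard_congr hlam₀ (fun q hq ↦ extendDtri_of_mem hG hq) hp

end PicardOp

end

end BacksteppingKernel

open BacksteppingKernel

theorem kernel_integral_equation_general (lambdaBar : ℝ)
    (lam : ℝ → ℝ) (hlam_cont : ContinuousOn lam (Set.Icc 0 1))
    (hlam_bnd : ∀ x ∈ Set.Icc (0:ℝ) 1, |lam x| ≤ lambdaBar) :
    ∃ G : ℝ × ℝ → ℝ,
      ContinuousOn G Dtri ∧
      (∀ p ∈ Dtri,
        G p = -(1 / 4) * (∫ s in p.2..p.1, lam (s / 2)) +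
          (1 / 4) * ∫ σ in p.2..p.1, ∫ s in (0:ℝ)..p.2, lam ((σ - s) / 2) * G (σ, s)) ∧
      (∀ p ∈ Dtri,
        |G p| ≤ lambdaBar * Real.exp (lambdaBar * (p.1 + p.2)) ∧
        |G p| ≤ lambdaBar * Real.exp (2 * lambdaBar)) ∧
      (∀ G' : ℝ × ℝ → ℝ, ContinuousOn G' Dtri →
        (∀ p ∈ Dtri,
          G' p = -(1 / 4) * (∫ s in p.2..p.1, lam (s / 2)) +
            (1 / 4) * ∫ σ in p.2..p.1, ∫ s in (0:ℝ)..p.2, lam ((σ - s) / 2) * G' (σ, s)) →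
        Set.EqOn G G' Dtri) := by
  have hlb0 : 0 ≤ lambdaBar := (abs_nonneg _).trans (hlam_bnd 0 ⟨le_rfl, zero_le_one⟩)
  set lamE := IccExtend zero_le_one ((Icc 0 1).domRestrict lam)
  have hE : EqOn lamE lam (Icc 0 1) := fun x hx ↦ IccExtend_of_mem _ _ hx
  have hEc : Continuous lamE := hlam_cont.domRestrict.Icc_extend'
  have hEb : ∀ x, |lamE x| ≤ lambdaBar := fun x ↦ hlam_bnd _ (projIcc 0 1 zero_le_one x).2
  set T := picardOp lamE hEc
  obtain ⟨m, hm⟩ := exists_contractingWith_iterate_of_dist_le_pow_div_factorial _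
    (dist_picardOp_iterate_le hEc hEb)
  set G := ContractingWith.fixedPoint _ hm
  have hTG : Function.IsFixedPt T G := hm.isFixedPt_fixedPoint_iterate
  have hsol : ∀ p ∈ Dtri, G p = picard lam G p := fun p hp ↦ calc
    G p = T G p := by rw [hTG.eq]
    _ = picard lam G p :=
      (picardOp_apply_of_mem hEc G hp).trans (picard_congr hE (fun _ _ ↦ rfl) hp)
  have hbound : ∀ p ∈ Dtri, |G p| ≤ lambdaBar * Real.exp (lambdaBar * (p.1 + p.2)) :=
    hm.fixedPoint_mem_of_mapsTo (isClosed_setOf_abs_le _ _)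
      ((mapsTo_picardOp hEc hEb).iterate m) (x := 0) fun q _ ↦ by
        simp only [coe_zero, Pi.zero_apply, abs_zero]; positivity
  refine ⟨G, G.continuous.continuousOn, hsol, fun p hp ↦ ⟨hbound p hp, (hbound p hp).trans ?_⟩,
    fun G' hG' hsol' ↦ ?_⟩
  · exact mul_le_mul_of_nonneg_left (Real.exp_le_exp.2 (by nlinarith [hp.2.2])) hlb0
  · have hG : G = extendDtri G' hG' := hm.fixedPoint_unique' (hTG.iterate m)
      ((isFixedPt_picardOp_extendDtri hEc hE hG' hsol').iterate m)
    intro p hp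
    rw [hG, extendDtri_of_mem hG' hp]

/-- Existence, uniqueness and bound for the continuous solution of the
integral-equation form of the backstepping gain-kernel PDE:
`G(ξ,η) = -(1/4)∫_η^ξ λ(s/2) ds + (1/4)∫_η^ξ ∫₀^η λ((σ-s)/2) G(σ,s) ds dσ`,
with `|G(ξ,η)| ≤ λ̄ e^{λ̄(ξ+η)} ≤ λ̄ e^{2λ̄}` on `D`. -/
theorem kernel_integral_equation (lambdaBar : ℝ) (hlam : 0 < lambdaBar)
    (lam : ℝ → ℝ) (hlam_cont : ContinuousOn lam (Set.Icc 0 1))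
    (hlam_bnd : ∀ x ∈ Set.Icc (0:ℝ) 1, |lam x| ≤ lambdaBar) :
    ∃ G : ℝ × ℝ → ℝ,
      ContinuousOn G Dtri ∧
      (∀ p ∈ Dtri,
        G p = -(1 / 4) * (∫ s in p.2..p.1, lam (s / 2)) +
          (1 / 4) * ∫ σ in p.2..p.1, ∫ s in (0:ℝ)..p.2, lam ((σ - s) / 2) * G (σ, s)) ∧
      (∀ p ∈ Dtri,
        |G p| ≤ lambdaBar * Real.exp (lambdaBar * (p.1 + p.2)) ∧
        |G p| ≤ lambdaBar * Real.exp (2 * lambdaBar)) ∧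
      (∀ G' : ℝ × ℝ → ℝ, ContinuousOn G' Dtri →
        (∀ p ∈ Dtri,
          G' p = -(1 / 4) * (∫ s in p.2..p.1, lam (s / 2)) +
            (1 / 4) * ∫ σ in p.2..p.1, ∫ s in (0:ℝ)..p.2, lam ((σ - s) / 2) * G' (σ, s)) →
        Set.EqOn G G' Dtri) :=
  kernel_integral_equation_general lambdaBar lam hlam_cont hlam_bnd
end

section
/- Let α ≥ 0, let μ : [0,1] → ℝ be continuous with sup |μ| ≤ α, and let D = {(ξ,η) ∈ ℝ² : 0 ≤ η ≤ ξ and ξ + η ≤ 2}. Let (fₙ)_{n≥0} be a sequence of continuous functions on D satisfying f_{n+1}(ξ,η) = (1/4)∫_η^ξ ∫₀^η μ((σ−s)/2) · fₙ(σ,s) ds dσ for all n ≥ 0, and suppose |f₀(ξ,η)| ≤ C for all (ξ,η) ∈ D, where C ≥ 0. Then for every n ≥ 0 and every (ξ,η) ∈ D, |fₙ(ξ,η)| ≤ C · αⁿ · (ξ + η)ⁿ / n!. -/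
/-!
Induction on `n`. On the integration region `η < σ ≤ ξ`, `0 < s ≤ η` the point `(σ, s)` stays in
`D` and `(σ - s) / 2 ∈ [0, 1]`, so the integrand is at most `α · C αⁿ (σ + η)ⁿ / n!`. The inner
integral contributes a factor `η`, the outer one `(ξ + η)ⁿ⁺¹ / (n + 1)`, and `η ≤ 1` absorbs the
prefactor `1/4`.
-/

open Set intervalIntegral
open scoped Interval

lemma integral_add_pow_le {a b c : ℝ} (n : ℕ) (hac : 0 ≤ a + c) :
    ∫ σ in a..b, (σ + c) ^ n ≤ (b + c) ^ (n + 1) / (n + 1) := by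
  rw [integral_comp_add_right (· ^ n), integral_pow]
  gcongr
  exact sub_le_self _ (by positivity)

lemma norm_integral_integral_le {F : ℝ → ℝ → ℝ} {K ξ η : ℝ} {n : ℕ} (hK : 0 ≤ K) (hη : 0 ≤ η)
    (hηξ : η ≤ ξ) (hF : ∀ σ ∈ Ioc η ξ, ∀ s ∈ Ioc 0 η, ‖F σ s‖ ≤ K * (σ + s) ^ n) :
    ‖∫ σ in η..ξ, ∫ s in (0 : ℝ)..η, F σ s‖ ≤ K * η * ((ξ + η) ^ (n + 1) / (n + 1)) := by
  have inner : ∀ σ ∈ Ioc η ξ, ‖∫ s in (0 : ℝ)..η, F σ s‖ ≤ K * η * (σ + η) ^ n := by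
    intro σ hσ
    have hbound : ∀ s ∈ Ι 0 η, ‖F σ s‖ ≤ K * (σ + η) ^ n := by
      intro s hs
      rw [uIoc_of_le hη] at hs
      exact (hF σ hσ s hs).trans (by gcongr; exacts [by linarith [hσ.1, hs.1], hs.2])
    calc ‖∫ s in (0 : ℝ)..η, F σ s‖ ≤ K * (σ + η) ^ n * |η - 0| :=
          norm_integral_le_of_norm_le_const hbound
      _ = K * η * (σ + η) ^ n := by rw [sub_zero, abs_of_nonneg hη]; ring
  calc ‖∫ σ in η..ξ, ∫ s in (0 : ℝ)..η, F σ s‖ ≤ ∫ σ in η..ξ, K * η * (σ + η) ^ n :=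
        norm_integral_le_of_norm_le hηξ (.of_forall inner)
          (Continuous.intervalIntegrable (by fun_prop) _ _)
    _ = K * η * ∫ σ in η..ξ, (σ + η) ^ n := integral_const_mul _ _
    _ ≤ K * η * ((ξ + η) ^ (n + 1) / (n + 1)) := by
        gcongr
        exact integral_add_pow_le n (by linarith)

lemma mem_Dtri_of_mem_Ioc {ξ η σ s : ℝ} (hp : (ξ, η) ∈ Dtri) (hσ : σ ∈ Ioc η ξ)
    (hs : s ∈ Ioc 0 η) : (σ, s) ∈ Dtri := by
  obtain ⟨-, -, hsum⟩ := hp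
  exact ⟨hs.1.le, by linarith [hs.2, hσ.1], by dsimp only; linarith [hs.2, hσ.2]⟩

lemma half_sub_mem_Icc_of_mem_Ioc {ξ η σ s : ℝ} (hp : (ξ, η) ∈ Dtri) (hσ : σ ∈ Ioc η ξ)
    (hs : s ∈ Ioc 0 η) : (σ - s) / 2 ∈ Icc (0 : ℝ) 1 := by
  obtain ⟨-, -, hsum⟩ := hp
  constructor <;> linarith [hs.1, hs.2, hσ.1, hσ.2]

noncomputable def volterraOp (μ : ℝ → ℝ) (g : ℝ × ℝ → ℝ) (p : ℝ × ℝ) : ℝ :=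
  1 / 4 * ∫ σ in p.2..p.1, ∫ s in (0 : ℝ)..p.2, μ ((σ - s) / 2) * g (σ, s)

lemma abs_volterraOp_le {μ : ℝ → ℝ} {g : ℝ × ℝ → ℝ} {α B : ℝ} {n : ℕ} (hα : 0 ≤ α) (hB : 0 ≤ B)
    (hμ : ∀ x ∈ Icc (0 : ℝ) 1, |μ x| ≤ α) (hg : ∀ q ∈ Dtri, |g q| ≤ B * (q.1 + q.2) ^ n)
    {p : ℝ × ℝ} (hp : p ∈ Dtri) :
    |volterraOp μ g p| ≤ α * B * ((p.1 + p.2) ^ (n + 1) / (n + 1)) := by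
  obtain ⟨ξ, η⟩ := p
  have ⟨hη, hηξ, hsum⟩ : 0 ≤ η ∧ η ≤ ξ ∧ ξ + η ≤ 2 := hp
  have hintegrand : ∀ σ ∈ Ioc η ξ, ∀ s ∈ Ioc 0 η,
      ‖μ ((σ - s) / 2) * g (σ, s)‖ ≤ α * B * (σ + s) ^ n := fun σ hσ s hs => by
    rw [Real.norm_eq_abs, abs_mul, mul_assoc]
    exact mul_le_mul (hμ _ (half_sub_mem_Icc_of_mem_Ioc hp hσ hs))
      (hg _ (mem_Dtri_of_mem_Ioc hp hσ hs)) (abs_nonneg _) hα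
  have hX : 0 ≤ α * B * ((ξ + η) ^ (n + 1) / (n + 1)) :=
    mul_nonneg (mul_nonneg hα hB) (div_nonneg (pow_nonneg (by linarith) _) n.cast_add_one_pos.le)
  rw [volterraOp, abs_mul, abs_of_pos (by norm_num : (0 : ℝ) < 1 / 4)]
  calc 1 / 4 * |∫ σ in η..ξ, ∫ s in (0 : ℝ)..η, μ ((σ - s) / 2) * g (σ, s)|
      ≤ 1 / 4 * (α * B * η * ((ξ + η) ^ (n + 1) / (n + 1))) := by
        gcongr
        exact norm_integral_integral_le (mul_nonneg hα hB) hη hηξ hintegrand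
    _ = η / 4 * (α * B * ((ξ + η) ^ (n + 1) / (n + 1))) := by ring
    _ ≤ α * B * ((ξ + η) ^ (n + 1) / (n + 1)) := mul_le_of_le_one_left hX (by linarith)

theorem iterate_factorial_bound_general (α C : ℝ) (hα : 0 ≤ α) (hC : 0 ≤ C)
    (μ : ℝ → ℝ)
    (hμ_bnd : ∀ x ∈ Set.Icc (0:ℝ) 1, |μ x| ≤ α)
    (f : ℕ → ℝ × ℝ → ℝ)
    (hrec : ∀ n, ∀ p ∈ Dtri,
      f (n + 1) p = (1 / 4) * ∫ σ in p.2..p.1, ∫ s in (0:ℝ)..p.2, μ ((σ - s) / 2) * f n (σ, s))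
    (h0 : ∀ p ∈ Dtri, |f 0 p| ≤ C) :
    ∀ n : ℕ, ∀ p ∈ Dtri, |f n p| ≤ C * α ^ n * (p.1 + p.2) ^ n / (n.factorial : ℝ) := by
  intro n
  induction n with
  | zero => simpa using h0
  | succ n ih =>
    intro p hp
    have ih' : ∀ q ∈ Dtri, |f n q| ≤ C * α ^ n / n.factorial * (q.1 + q.2) ^ n :=
      fun q hq => (ih q hq).trans_eq (by ring)
    have hstep : f (n + 1) p = volterraOp μ (f n) p := hrec n p hp
    rw [hstep]
    refine (abs_volterraOp_le hα (by positivity) hμ_bnd ih' hp).trans_eq ?_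
    rw [Nat.factorial_succ, Nat.cast_mul, Nat.cast_succ]
    field_simp
    ring

/-- Inductive bound for the successive-approximation difference sequence:
if `f_{n+1}(ξ,η) = (1/4)∫_η^ξ ∫₀^η μ((σ-s)/2) fₙ(σ,s) ds dσ` and `|f₀| ≤ C` on `D`,
then `|fₙ(ξ,η)| ≤ C αⁿ (ξ+η)ⁿ / n!`. -/
theorem iterate_factorial_bound (α C : ℝ) (hα : 0 ≤ α) (hC : 0 ≤ C)
    (μ : ℝ → ℝ) (hμ_cont : ContinuousOn μ (Set.Icc 0 1))
    (hμ_bnd : ∀ x ∈ Set.Icc (0:ℝ) 1, |μ x| ≤ α)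
    (f : ℕ → ℝ × ℝ → ℝ)
    (hf_cont : ∀ n, ContinuousOn (f n) Dtri)
    (hrec : ∀ n, ∀ p ∈ Dtri,
      f (n + 1) p = (1 / 4) * ∫ σ in p.2..p.1, ∫ s in (0:ℝ)..p.2, μ ((σ - s) / 2) * f n (σ, s))
    (h0 : ∀ p ∈ Dtri, |f 0 p| ≤ C) :
    ∀ n : ℕ, ∀ p ∈ Dtri, |f n p| ≤ C * α ^ n * (p.1 + p.2) ^ n / (n.factorial : ℝ) :=
  iterate_factorial_bound_general α C hα hC μ hμ_bnd f hrec h0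
end

section
/- (Existence and bound for the time derivative of the gain kernel.) Let λ̄ > 0, let λ, μ : [0,1] → ℝ be continuous with sup |λ| ≤ λ̄, let D = {(ξ,η) : 0 ≤ η ≤ ξ, ξ + η ≤ 2}, and let G : D → ℝ be the unique continuous solution of G(ξ,η) = −(1/4)∫_η^ξ λ(s/2) ds + (1/4)∫_η^ξ ∫₀^η λ((σ−s)/2) G(σ,s) ds dσ. Then the linear integral equation H(ξ,η) = −(1/4)∫_η^ξ μ(s/2) ds + (1/4)∫_η^ξ ∫₀^η [ μ((σ−s)/2)·G(σ,s) + λ((σ−s)/2)·H(σ,s) ] ds dσ has a unique continuous solution H : D → ℝ, and it satisfies sup_D |H| ≤ M · sup_{[0,1]} |μ|, where M = e^{2λ̄}·(1 + λ̄·e^{2λ̄}). -/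
/-!
Both equations have the form `W = f + K W` with the Volterra operator
`K W (ξ, η) = (1/4) ∫_η^ξ ∫_0^η λ((σ - s)/2) W(σ, s) ds dσ`; the forcing is
`f = -(1/4) ∫_η^ξ λ(s/2) ds` for `G`, and for `H` it is
`f = -(1/4) ∫_η^ξ μ(s/2) ds + (1/4) ∫_η^ξ ∫_0^η μ((σ - s)/2) G(σ, s) ds dσ`.
On `C(D)`, induction gives `|Kⁿ h (ξ, η)| ≤ (λ̄/4)ⁿ (ξη)ⁿ / (n!)² ‖h‖`, and `ξη ≤ 1` on `D`,
so `‖Kⁿ‖ ≤ (λ̄/4)ⁿ / n!`. Hence the Neumann series `∑ Kⁿ f` is the unique solution, of norm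
at most `e^{λ̄/4} ‖f‖`. For `G` this gives `‖G‖ ≤ e^{λ̄/4} λ̄/2`, so the forcing of `H` is at
most `μ̄/2 + μ̄ ‖G‖/4`, and the resulting bound on `H` is below `e^{2λ̄}(1 + λ̄ e^{2λ̄}) μ̄`.
-/

open Set MeasureTheory intervalIntegral
open scoped Nat

namespace GainKernel

section Neumann

variable {𝕜 E : Type*} [NontriviallyNormedField 𝕜] [NormedAddCommGroup E] [NormedSpace 𝕜 E]
  {K : E →L[𝕜] E} {c : ℝ}

lemma eq_of_sub_apply_eq (hK : ∀ (n : ℕ) (x : E), ‖(K ^ n) x‖ ≤ c ^ n / n ! * ‖x‖) {x y : E}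
    (hxy : x - K x = y - K y) : x = y := by
  set z := x - y
  have hz : K z = z := by
    rw [map_sub]
    linear_combination (norm := module) hxy.symm
  have hpow (n : ℕ) : (K ^ n) z = z := by
    induction n with
    | zero => rfl
    | succ n ih => rw [pow_succ', mul_apply_eq_comp, ih, hz]
  have hlim : Filter.Tendsto (fun n : ℕ => c ^ n / n ! * ‖z‖) Filter.atTop (nhds 0) := by
    simpa using (FloorSemiring.tendsto_pow_div_factorial_atTop c).mul_const ‖z‖
  exact sub_eq_zero.1 (norm_le_zero_iff.1 (ge_of_tendsto' hlim fun n =>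
    (congrArg norm (hpow n)).symm.trans_le (hK n z)))

variable [CompleteSpace E]

lemma summable_pow_apply (hK : ∀ (n : ℕ) (x : E), ‖(K ^ n) x‖ ≤ c ^ n / n ! * ‖x‖) (f : E) :
    Summable fun n => (K ^ n) f :=
  .of_norm_bounded ((Real.summable_pow_div_factorial c).mul_right ‖f‖) (hK · f)

lemma tsum_pow_apply_sub_apply (hK : ∀ (n : ℕ) (x : E), ‖(K ^ n) x‖ ≤ c ^ n / n ! * ‖x‖)
    (f : E) : (∑' n, (K ^ n) f) - K (∑' n, (K ^ n) f) = f := by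
  have hs := summable_pow_apply hK f
  rw [sub_eq_iff_eq_add, K.map_tsum hs, hs.tsum_eq_zero_add]
  simp only [pow_zero, pow_succ', mul_apply_eq_comp, one_apply_eq_self]

lemma norm_le_exp_mul_norm_sub_apply (hK : ∀ (n : ℕ) (x : E), ‖(K ^ n) x‖ ≤ c ^ n / n ! * ‖x‖)
    (x : E) : ‖x‖ ≤ Real.exp c * ‖x - K x‖ := by
  have hx := eq_of_sub_apply_eq hK (tsum_pow_apply_sub_apply hK (x - K x)).symm
  calc ‖x‖ = ‖∑' n, (K ^ n) (x - K x)‖ := by rw [← hx]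
    _ ≤ _ := tsum_of_norm_bounded
        ((Real.exp_eq_exp_ℝ ▸ NormedSpace.expSeries_div_hasSum_exp c).mul_right _) (hK · _)

end Neumann

lemma isCompact_Dtri : IsCompact Dtri := by
  refine (isCompact_Icc.prod isCompact_Icc : IsCompact (Icc (0:ℝ) 2 ×ˢ Icc (0:ℝ) 2))
    |>.of_isClosed_subset ?_ fun p ⟨h0, h1, h2⟩ => ⟨⟨by linarith, by linarith⟩, ⟨h0, by linarith⟩⟩
  exact (isClosed_le continuous_const continuous_snd).inter
    ((isClosed_le continuous_snd continuous_fst).inter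
      (isClosed_le (continuous_fst.add continuous_snd) continuous_const))

instance : CompactSpace Dtri := isCompact_iff_compactSpace.mp isCompact_Dtri

instance : Nonempty Dtri := ⟨⟨(0, 0), le_rfl, le_rfl, by norm_num⟩⟩

lemma mem_Dtri_of_mem_Icc {p : ℝ × ℝ} (hp : p ∈ Dtri) {σ s : ℝ} (hσ : σ ∈ Icc p.2 p.1)
    (hs : s ∈ Icc 0 p.2) : (σ, s) ∈ Dtri :=
  ⟨hs.1, hs.2.trans hσ.1, by linarith [hσ.2, hs.2, hp.2.2]⟩

lemma half_sub_mem_Icc_of_mem_Dtri {q : ℝ × ℝ} (hq : q ∈ Dtri) :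
    (q.1 - q.2) / 2 ∈ Icc (0:ℝ) 1 :=
  ⟨by linarith [hq.2.1], by linarith [hq.1, hq.2.2]⟩

lemma half_mem_Icc_of_mem_Dtri {p : ℝ × ℝ} (hp : p ∈ Dtri) {s : ℝ} (hs : s ∈ Icc p.2 p.1) :
    s / 2 ∈ Icc (0:ℝ) 1 :=
  ⟨by linarith [hp.1, hs.1], by linarith [hp.1, hp.2.2, hs.2]⟩

lemma mul_mem_Icc_of_mem_Dtri {p : ℝ × ℝ} (hp : p ∈ Dtri) : p.1 * p.2 ∈ Icc (0:ℝ) 1 := by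
  obtain ⟨h0, h1, h2⟩ := hp
  exact ⟨by nlinarith, by nlinarith [sq_nonneg (p.1 - p.2)]⟩

lemma mk_clamp_mem_Dtri {η : ℝ} (hη : η ∈ Icc (0:ℝ) 1) (x : ℝ) :
    (max η (min x (2 - η)), η) ∈ Dtri :=
  ⟨hη.1, le_max_left _ _, by linarith [max_le (by linarith [hη.2]) (min_le_right x (2 - η))]⟩

noncomputable def retractDtri : C(ℝ × ℝ, Dtri) where
  toFun p := ⟨_, mk_clamp_mem_Dtri (projIcc 0 1 zero_le_one p.2).2 p.1⟩
  continuous_toFun := by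
    have hη : Continuous fun p : ℝ × ℝ => (projIcc (0:ℝ) 1 zero_le_one p.2 : ℝ) :=
      continuous_subtype_val.comp (continuous_projIcc.comp continuous_snd)
    exact Continuous.subtype_mk (by fun_prop) _

lemma retractDtri_of_mem {p : ℝ × ℝ} (hp : p ∈ Dtri) : (retractDtri p : ℝ × ℝ) = p := by
  obtain ⟨h0, h1, h2⟩ := hp
  have hη : (projIcc (0:ℝ) 1 zero_le_one p.2 : ℝ) = p.2 := by
    rw [projIcc_of_mem _ ⟨h0, by linarith⟩]
  simp [retractDtri, hη, min_eq_left (show p.1 ≤ 2 - p.2 by linarith), max_eq_right h1]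

lemma retractDtri_eq_mk {p : ℝ × ℝ} (hp : p ∈ Dtri) : retractDtri p = ⟨p, hp⟩ :=
  Subtype.ext (retractDtri_of_mem hp)

lemma exists_continuous_eqOn_Dtri {W : ℝ × ℝ → ℝ} (hW : ContinuousOn W Dtri) :
    ∃ W' : ℝ × ℝ → ℝ, Continuous W' ∧ EqOn W' W Dtri :=
  ⟨W ∘ (retractDtri ·), hW.comp_continuous (continuous_subtype_val.comp retractDtri.continuous)
    fun p => (retractDtri p).2, fun _ hp => congrArg W (retractDtri_of_mem hp)⟩

noncomputable def doubleIntegral (k : ℝ × ℝ → ℝ) (p : ℝ × ℝ) : ℝ :=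
  (1 / 4) * ∫ σ in p.2..p.1, ∫ s in (0:ℝ)..p.2, k (σ, s)

lemma doubleIntegral_congr {k k' : ℝ × ℝ → ℝ} (h : EqOn k k' Dtri) {p : ℝ × ℝ}
    (hp : p ∈ Dtri) : doubleIntegral k p = doubleIntegral k' p := by
  refine congrArg _ (integral_congr fun σ hσ => integral_congr fun s hs => h ?_)
  rw [uIcc_of_le hp.2.1] at hσ
  rw [uIcc_of_le hp.1] at hs
  exact mem_Dtri_of_mem_Icc hp hσ hs

lemma continuous_doubleIntegral {k : ℝ × ℝ → ℝ} (hk : Continuous k) :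
    Continuous (doubleIntegral k) := by
  set I : ℝ → ℝ → ℝ := fun η σ => ∫ s in (0:ℝ)..η, k (σ, s)
  have hI : Continuous (Function.uncurry I) := by
    have := continuous_parametric_primitive_of_continuous (μ := volume) (a₀ := 0)
      (f := fun σ s => k (σ, s)) (hk.comp (by fun_prop))
    exact this.comp continuous_swap
  have hI_int (η a b : ℝ) : IntervalIntegrable (I η) volume a b :=
    (hI.comp (Continuous.prodMk_right η)).intervalIntegrable a b
  have hsplit (p : ℝ × ℝ) : doubleIntegral k p =
      (1 / 4) * ((∫ σ in (0:ℝ)..p.1, I p.2 σ) - ∫ σ in (0:ℝ)..p.2, I p.2 σ) := by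
    rw [integral_interval_sub_left (hI_int _ _ _) (hI_int _ _ _)]
    rfl
  rw [show doubleIntegral k = _ from funext hsplit]
  have hJ {b : ℝ × ℝ → ℝ} (hb : Continuous b) :
      Continuous fun p : ℝ × ℝ => ∫ σ in (0:ℝ)..b p, I p.2 σ :=
    continuous_parametric_intervalIntegral_of_continuous (f := fun (p : ℝ × ℝ) σ => I p.2 σ)
      (hI.comp (continuous_fst.snd.prodMk continuous_snd)) hb
  exact continuous_const.mul ((hJ continuous_fst).sub (hJ continuous_snd))

lemma continuousOn_doubleIntegral {k : ℝ × ℝ → ℝ} (hk : ContinuousOn k Dtri) :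
    ContinuousOn (doubleIntegral k) Dtri := by
  obtain ⟨k', hk', hkk'⟩ := exists_continuous_eqOn_Dtri hk
  exact (continuous_doubleIntegral hk').continuousOn.congr fun _ hp =>
    doubleIntegral_congr hkk'.symm hp

lemma doubleIntegral_add {k₁ k₂ : ℝ × ℝ → ℝ} (hk₁ : ContinuousOn k₁ Dtri)
    (hk₂ : ContinuousOn k₂ Dtri) {p : ℝ × ℝ} (hp : p ∈ Dtri) :
    doubleIntegral (k₁ + k₂) p = doubleIntegral k₁ p + doubleIntegral k₂ p := by
  obtain ⟨k₁', hc₁, he₁⟩ := exists_continuous_eqOn_Dtri hk₁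
  obtain ⟨k₂', hc₂, he₂⟩ := exists_continuous_eqOn_Dtri hk₂
  rw [← doubleIntegral_congr he₁ hp, ← doubleIntegral_congr he₂ hp,
    ← doubleIntegral_congr (k := k₁' + k₂')
      (fun q hq => by simp only [Pi.add_apply, he₁ hq, he₂ hq]) hp]
  have hinner {k : ℝ × ℝ → ℝ} (hk : Continuous k) (σ : ℝ) :
      IntervalIntegrable (fun s => k (σ, s)) volume 0 p.2 :=
    (hk.comp (Continuous.prodMk_right σ)).intervalIntegrable _ _
  have houter {k : ℝ × ℝ → ℝ} (hk : Continuous k) :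
      IntervalIntegrable (fun σ => ∫ s in (0:ℝ)..p.2, k (σ, s)) volume p.2 p.1 :=
    (continuous_parametric_intervalIntegral_of_continuous' (f := fun σ s => k (σ, s))
      (hk.comp (by fun_prop)) _ _).intervalIntegrable _ _
  simp only [doubleIntegral, ← mul_add, ← integral_add (houter hc₁) (houter hc₂)]
  exact congrArg _ (integral_congr fun σ _ => integral_add (hinner hc₁ σ) (hinner hc₂ σ))

lemma doubleIntegral_const_mul (c : ℝ) (k : ℝ × ℝ → ℝ) (p : ℝ × ℝ) :
    doubleIntegral (fun q => c * k q) p = c * doubleIntegral k p := by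
  simp only [doubleIntegral, intervalIntegral.integral_const_mul]
  ring

lemma abs_doubleIntegral_le {k : ℝ × ℝ → ℝ} {c : ℝ} {n : ℕ} (hc : 0 ≤ c)
    (hk : ∀ q ∈ Dtri, |k q| ≤ c * (q.1 * q.2) ^ n) {p : ℝ × ℝ} (hp : p ∈ Dtri) :
    |doubleIntegral k p| ≤ c / 4 * (p.1 * p.2) ^ (n + 1) / (n + 1) ^ 2 := by
  obtain ⟨ξ, η⟩ := p
  obtain ⟨hη, hηξ, -⟩ := id hp
  dsimp only at hη hηξ ⊢
  set C := c * η ^ (n + 1) / (n + 1)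
  have hinner : ∀ σ ∈ Ioc η ξ, ‖∫ s in (0:ℝ)..η, k (σ, s)‖ ≤ C * σ ^ n := by
    intro σ hσ
    calc ‖∫ s in (0:ℝ)..η, k (σ, s)‖ ≤ ∫ s in (0:ℝ)..η, c * σ ^ n * s ^ n := by
          refine norm_integral_le_of_norm_le hη (ae_of_all _ fun s hs => ?_)
            ((by fun_prop : Continuous fun s : ℝ => c * σ ^ n * s ^ n).intervalIntegrable _ _)
          rw [Real.norm_eq_abs, mul_assoc, ← mul_pow]
          exact hk _ (mem_Dtri_of_mem_Icc hp (Ioc_subset_Icc_self hσ) (Ioc_subset_Icc_self hs))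
      _ = C * σ ^ n := by
          rw [intervalIntegral.integral_const_mul, integral_pow]
          ring
  have hC : 0 ≤ C := by positivity
  calc |doubleIntegral k (ξ, η)| = 1 / 4 * ‖∫ σ in η..ξ, ∫ s in (0:ℝ)..η, k (σ, s)‖ := by
        simp [doubleIntegral, abs_mul]
    _ ≤ 1 / 4 * ∫ σ in η..ξ, C * σ ^ n := by
        gcongr
        exact norm_integral_le_of_norm_le hηξ (ae_of_all _ hinner)
          ((by fun_prop : Continuous fun σ : ℝ => C * σ ^ n).intervalIntegrable _ _)
    _ = 1 / 4 * (C * ((ξ ^ (n + 1) - η ^ (n + 1)) / (n + 1))) := by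
        rw [intervalIntegral.integral_const_mul, integral_pow]
    _ ≤ 1 / 4 * (C * (ξ ^ (n + 1) / (n + 1))) := by
        gcongr
        exact sub_le_self _ (by positivity)
    _ = c / 4 * (ξ * η) ^ (n + 1) / (n + 1) ^ 2 := by
        simp only [C]
        field_simp
        ring

noncomputable def forcing (a : ℝ → ℝ) (p : ℝ × ℝ) : ℝ :=
  -(1 / 4) * ∫ s in p.2..p.1, a (s / 2)

lemma continuousOn_forcing {a : ℝ → ℝ} (ha : ContinuousOn a (Icc 0 1)) :
    ContinuousOn (forcing a) Dtri := by
  set a' : ℝ → ℝ := fun x => a (projIcc 0 1 zero_le_one x)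
  have ha' : Continuous a' := ha.comp_continuous
    (continuous_subtype_val.comp continuous_projIcc) fun x => (projIcc 0 1 zero_le_one x).2
  have hg : Continuous fun s : ℝ => a' (s / 2) := by fun_prop
  have hF := continuous_primitive (μ := volume) (fun a b => hg.intervalIntegrable a b) 0
  have hcont : Continuous (forcing a') := by
    have : forcing a' = fun p =>
        -(1 / 4) * ((∫ s in (0:ℝ)..p.1, a' (s / 2)) - ∫ s in (0:ℝ)..p.2, a' (s / 2)) :=
      funext fun p => by
        rw [forcing, integral_interval_sub_left (hg.intervalIntegrable _ _)
          (hg.intervalIntegrable _ _)]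
    rw [this]
    exact continuous_const.mul ((hF.comp continuous_fst).sub (hF.comp continuous_snd))
  refine hcont.continuousOn.congr fun p hp => congrArg _ (integral_congr fun s hs => ?_)
  rw [uIcc_of_le hp.2.1] at hs
  simp only [a', projIcc_of_mem _ (half_mem_Icc_of_mem_Dtri hp hs)]

lemma abs_forcing_le {a : ℝ → ℝ} {A : ℝ} (hA : ∀ x ∈ Icc (0:ℝ) 1, |a x| ≤ A) {p : ℝ × ℝ}
    (hp : p ∈ Dtri) : |forcing a p| ≤ A / 2 := by
  have hA0 : 0 ≤ A := (abs_nonneg _).trans (hA 0 ⟨le_rfl, zero_le_one⟩)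
  have hint : ‖∫ s in p.2..p.1, a (s / 2)‖ ≤ A * |p.1 - p.2| :=
    norm_integral_le_of_norm_le_const fun s hs => by
      rw [uIoc_of_le hp.2.1] at hs
      exact hA _ (half_mem_Icc_of_mem_Dtri hp (Ioc_subset_Icc_self hs))
  have hlen : |p.1 - p.2| ≤ 2 := by
    rw [abs_of_nonneg (sub_nonneg.2 hp.2.1)]
    linarith [hp.1, hp.2.2]
  rw [forcing, abs_mul, abs_neg, abs_of_pos (by norm_num : (0:ℝ) < 1 / 4)]
  rw [Real.norm_eq_abs] at hint
  nlinarith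

noncomputable def volterra (a : ℝ → ℝ) (W : ℝ × ℝ → ℝ) : ℝ × ℝ → ℝ :=
  doubleIntegral fun q => a ((q.1 - q.2) / 2) * W q

lemma continuousOn_volterra_integrand {a : ℝ → ℝ} {W : ℝ × ℝ → ℝ}
    (ha : ContinuousOn a (Icc 0 1)) (hW : ContinuousOn W Dtri) :
    ContinuousOn (fun q => a ((q.1 - q.2) / 2) * W q) Dtri :=
  (ha.comp (by fun_prop) fun _ hq => half_sub_mem_Icc_of_mem_Dtri hq).mul hW

lemma continuousOn_volterra {a : ℝ → ℝ} {W : ℝ × ℝ → ℝ} (ha : ContinuousOn a (Icc 0 1))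
    (hW : ContinuousOn W Dtri) : ContinuousOn (volterra a W) Dtri :=
  continuousOn_doubleIntegral (continuousOn_volterra_integrand ha hW)

lemma volterra_congr (a : ℝ → ℝ) {W W' : ℝ × ℝ → ℝ} (h : EqOn W W' Dtri) {p : ℝ × ℝ}
    (hp : p ∈ Dtri) : volterra a W p = volterra a W' p :=
  doubleIntegral_congr (fun _ hq => congrArg _ (h hq)) hp

lemma volterra_add {a : ℝ → ℝ} {W₁ W₂ : ℝ × ℝ → ℝ} (ha : ContinuousOn a (Icc 0 1))
    (hW₁ : ContinuousOn W₁ Dtri) (hW₂ : ContinuousOn W₂ Dtri) {p : ℝ × ℝ} (hp : p ∈ Dtri) :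
    volterra a (W₁ + W₂) p = volterra a W₁ p + volterra a W₂ p := by
  unfold volterra
  rw [← doubleIntegral_add (continuousOn_volterra_integrand ha hW₁)
    (continuousOn_volterra_integrand ha hW₂) hp]
  simp only [Pi.add_apply, mul_add]
  rfl

lemma volterra_smul (a : ℝ → ℝ) (c : ℝ) (W : ℝ × ℝ → ℝ) (p : ℝ × ℝ) :
    volterra a (c • W) p = c * volterra a W p := by
  rw [volterra, volterra, ← doubleIntegral_const_mul]
  simp only [Pi.smul_apply, smul_eq_mul, mul_left_comm]

lemma abs_volterra_le {a : ℝ → ℝ} {A : ℝ} (hA : ∀ x ∈ Icc (0:ℝ) 1, |a x| ≤ A)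
    {W : ℝ × ℝ → ℝ} {c : ℝ} {n : ℕ} (hc : 0 ≤ c)
    (hW : ∀ q ∈ Dtri, |W q| ≤ c * (q.1 * q.2) ^ n) {p : ℝ × ℝ} (hp : p ∈ Dtri) :
    |volterra a W p| ≤ A * c / 4 * (p.1 * p.2) ^ (n + 1) / (n + 1) ^ 2 := by
  have hA0 : 0 ≤ A := (abs_nonneg _).trans (hA 0 ⟨le_rfl, zero_le_one⟩)
  refine (abs_doubleIntegral_le (mul_nonneg hA0 hc) (fun q hq => ?_) hp).trans_eq (by ring)
  rw [abs_mul, mul_assoc]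
  exact mul_le_mul (hA _ (half_sub_mem_Icc_of_mem_Dtri hq)) (hW q hq) (abs_nonneg _) hA0

lemma abs_volterra_le_of_abs_le {a : ℝ → ℝ} {A : ℝ} (hA : ∀ x ∈ Icc (0:ℝ) 1, |a x| ≤ A)
    {W : ℝ × ℝ → ℝ} {c : ℝ} (hc : 0 ≤ c) (hW : ∀ q ∈ Dtri, |W q| ≤ c) {p : ℝ × ℝ}
    (hp : p ∈ Dtri) : |volterra a W p| ≤ A * c / 4 := by
  have hA0 : 0 ≤ A := (abs_nonneg _).trans (hA 0 ⟨le_rfl, zero_le_one⟩)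
  have hp1 := (mul_mem_Icc_of_mem_Dtri hp).2
  refine (abs_volterra_le hA hc (n := 0) (by simpa using hW) hp).trans ?_
  simp only [zero_add, pow_one, Nat.cast_zero, one_pow, div_one]
  exact mul_le_of_le_one_right (by positivity) hp1

noncomputable def volterraCLM {a : ℝ → ℝ} (ha : ContinuousOn a (Icc 0 1)) :
    C(Dtri, ℝ) →L[ℝ] C(Dtri, ℝ) :=
  have hret (h : C(Dtri, ℝ)) : ContinuousOn (fun p => h (retractDtri p)) Dtri :=
    (h.continuous.comp retractDtri.continuous).continuousOn
  LinearMap.mkContinuousOfExistsBound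
    { toFun h := ⟨fun q => volterra a (fun p => h (retractDtri p)) q,
        (continuousOn_volterra ha (hret h)).domRestrict⟩
      map_add' h₁ h₂ := ContinuousMap.ext fun q => volterra_add ha (hret h₁) (hret h₂) q.2
      map_smul' c h := ContinuousMap.ext fun q => volterra_smul a c (fun p => h (retractDtri p)) q }
    (by
      obtain ⟨A, hA⟩ := isCompact_Icc.exists_bound_of_continuousOn ha
      simp only [Real.norm_eq_abs] at hA
      have hA0 : 0 ≤ A := (abs_nonneg _).trans (hA 0 ⟨le_rfl, zero_le_one⟩)
      refine ⟨A / 4, fun h => (ContinuousMap.norm_le _ (by positivity)).2 fun q => ?_⟩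
      show |volterra a (fun p => h (retractDtri p)) q| ≤ A / 4 * ‖h‖
      refine (abs_volterra_le_of_abs_le hA (norm_nonneg h) (fun p _ => ?_) q.2).trans_eq (by ring)
      exact (Real.norm_eq_abs _).symm.trans_le (h.norm_coe_le_norm _))

lemma volterraCLM_apply {a : ℝ → ℝ} (ha : ContinuousOn a (Icc 0 1)) (h : C(Dtri, ℝ)) (q : Dtri) :
    volterraCLM ha h q = volterra a (fun p => h (retractDtri p)) q :=
  rfl

lemma abs_volterraCLM_pow_apply_le {a : ℝ → ℝ} (ha : ContinuousOn a (Icc 0 1)) {A : ℝ}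
    (hA : ∀ x ∈ Icc (0:ℝ) 1, |a x| ≤ A) (n : ℕ) (h : C(Dtri, ℝ)) (q : Dtri) :
    |(volterraCLM ha ^ n) h q| ≤
      (A / 4) ^ n * ‖h‖ * ((q : ℝ × ℝ).1 * (q : ℝ × ℝ).2) ^ n / (n ! : ℝ) ^ 2 := by
  have hA0 : 0 ≤ A := (abs_nonneg _).trans (hA 0 ⟨le_rfl, zero_le_one⟩)
  induction n generalizing q with
  | zero => simpa using h.norm_coe_le_norm q
  | succ n ih =>
    rw [pow_succ', mul_apply_eq_comp, volterraCLM_apply]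
    refine (abs_volterra_le hA (c := (A / 4) ^ n * ‖h‖ / (n ! : ℝ) ^ 2) (n := n) (by positivity)
      (fun p hp => ?_) q.2).trans_eq ?_
    · rw [retractDtri_eq_mk hp]
      exact (ih _).trans_eq (by ring)
    · rw [Nat.factorial_succ]
      push_cast
      field_simp
      ring

lemma norm_volterraCLM_pow_apply_le {a : ℝ → ℝ} (ha : ContinuousOn a (Icc 0 1)) {A : ℝ}
    (hA : ∀ x ∈ Icc (0:ℝ) 1, |a x| ≤ A) (n : ℕ) (h : C(Dtri, ℝ)) :
    ‖(volterraCLM ha ^ n) h‖ ≤ (A / 4) ^ n / n ! * ‖h‖ := by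
  have hA0 : 0 ≤ A := (abs_nonneg _).trans (hA 0 ⟨le_rfl, zero_le_one⟩)
  refine (ContinuousMap.norm_le _ (by positivity)).2 fun q => ?_
  obtain ⟨hq0, hq1⟩ := mul_mem_Icc_of_mem_Dtri q.2
  have hfac : (1:ℝ) ≤ n ! := by exact_mod_cast n.factorial_pos
  calc ‖(volterraCLM ha ^ n) h q‖
      ≤ (A / 4) ^ n * ‖h‖ * ((q : ℝ × ℝ).1 * (q : ℝ × ℝ).2) ^ n / (n ! : ℝ) ^ 2 :=
        abs_volterraCLM_pow_apply_le ha hA n h q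
    _ ≤ (A / 4) ^ n * ‖h‖ * 1 / n ! := by
        gcongr
        · exact pow_le_one₀ hq0 hq1
        · exact le_self_pow₀ hfac two_ne_zero
    _ = (A / 4) ^ n / n ! * ‖h‖ := by ring

lemma exists_norm_volterraCLM_pow_apply_le {a : ℝ → ℝ} (ha : ContinuousOn a (Icc 0 1)) :
    ∃ c : ℝ, ∀ (n : ℕ) (h : C(Dtri, ℝ)), ‖(volterraCLM ha ^ n) h‖ ≤ c ^ n / n ! * ‖h‖ := by
  obtain ⟨A, hA⟩ := isCompact_Icc.exists_bound_of_continuousOn ha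
  exact ⟨A / 4, norm_volterraCLM_pow_apply_le ha fun x hx =>
    (Real.norm_eq_abs _).symm.trans_le (hA x hx)⟩

noncomputable def restrictDtri {W : ℝ × ℝ → ℝ} (hW : ContinuousOn W Dtri) : C(Dtri, ℝ) :=
  ⟨fun q => W q, continuousOn_iff_continuous_domRestrict.1 hW⟩

lemma restrictDtri_sub_volterraCLM_apply {a : ℝ → ℝ} (ha : ContinuousOn a (Icc 0 1))
    {W f : ℝ × ℝ → ℝ} (hW : ContinuousOn W Dtri)
    (hsol : ∀ p ∈ Dtri, W p = f p + volterra a W p) (q : Dtri) :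
    (restrictDtri hW - volterraCLM ha (restrictDtri hW)) q = f q := by
  rw [ContinuousMap.sub_apply, volterraCLM_apply,
    volterra_congr a (W := fun p => restrictDtri hW (retractDtri p)) (W' := W)
      (fun p hp => congrArg W (retractDtri_of_mem hp)) q.2]
  exact sub_eq_of_eq_add (hsol q q.2)

lemma exists_solution {a : ℝ → ℝ} {f : ℝ × ℝ → ℝ} (ha : ContinuousOn a (Icc 0 1))
    (hf : ContinuousOn f Dtri) :
    ∃ W : ℝ × ℝ → ℝ, ContinuousOn W Dtri ∧ ∀ p ∈ Dtri, W p = f p + volterra a W p := by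
  obtain ⟨c, hK⟩ := exists_norm_volterraCLM_pow_apply_le ha
  set x := ∑' n, (volterraCLM ha ^ n) (restrictDtri hf)
  refine ⟨fun p => x (retractDtri p),
    (x.continuous.comp retractDtri.continuous).continuousOn, fun p hp => ?_⟩
  have hx := congrArg (fun g : C(Dtri, ℝ) => g ⟨p, hp⟩)
    (tsum_pow_apply_sub_apply hK (restrictDtri hf))
  show x (retractDtri p) = _
  rw [retractDtri_eq_mk hp]
  exact eq_add_of_sub_eq hx

lemma eqOn_of_solution {a : ℝ → ℝ} {f W₁ W₂ : ℝ × ℝ → ℝ} (ha : ContinuousOn a (Icc 0 1))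
    (hW₁ : ContinuousOn W₁ Dtri) (hW₂ : ContinuousOn W₂ Dtri)
    (h₁ : ∀ p ∈ Dtri, W₁ p = f p + volterra a W₁ p)
    (h₂ : ∀ p ∈ Dtri, W₂ p = f p + volterra a W₂ p) : EqOn W₁ W₂ Dtri := by
  obtain ⟨c, hK⟩ := exists_norm_volterraCLM_pow_apply_le ha
  have := eq_of_sub_apply_eq hK <| ContinuousMap.ext fun q =>
    (restrictDtri_sub_volterraCLM_apply ha hW₁ h₁ q).trans
      (restrictDtri_sub_volterraCLM_apply ha hW₂ h₂ q).symm
  exact fun p hp => congrArg (fun g : C(Dtri, ℝ) => g ⟨p, hp⟩) this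

lemma abs_le_of_solution {a : ℝ → ℝ} {f W : ℝ × ℝ → ℝ} (ha : ContinuousOn a (Icc 0 1))
    {A B : ℝ} (hA : ∀ x ∈ Icc (0:ℝ) 1, |a x| ≤ A) (hW : ContinuousOn W Dtri)
    (hsol : ∀ p ∈ Dtri, W p = f p + volterra a W p) (hf : ∀ p ∈ Dtri, |f p| ≤ B) {p : ℝ × ℝ}
    (hp : p ∈ Dtri) : |W p| ≤ Real.exp (A / 4) * B := by
  have hres : ‖restrictDtri hW - volterraCLM ha (restrictDtri hW)‖ ≤ B :=
    (ContinuousMap.norm_le_of_nonempty _).2 fun q => by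
      rw [restrictDtri_sub_volterraCLM_apply ha hW hsol q, Real.norm_eq_abs]
      exact hf q q.2
  calc |W p| = ‖restrictDtri hW ⟨p, hp⟩‖ := (Real.norm_eq_abs _).symm
    _ ≤ ‖restrictDtri hW‖ := ContinuousMap.norm_coe_le_norm _ _
    _ ≤ Real.exp (A / 4) * ‖restrictDtri hW - volterraCLM ha (restrictDtri hW)‖ :=
        norm_le_exp_mul_norm_sub_apply (norm_volterraCLM_pow_apply_le ha hA) _
    _ ≤ Real.exp (A / 4) * B := by gcongr

lemma volterra_add_volterra {a b : ℝ → ℝ} {U W : ℝ × ℝ → ℝ} (ha : ContinuousOn a (Icc 0 1))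
    (hb : ContinuousOn b (Icc 0 1)) (hU : ContinuousOn U Dtri) (hW : ContinuousOn W Dtri)
    {p : ℝ × ℝ} (hp : p ∈ Dtri) :
    volterra a U p + volterra b W p =
      doubleIntegral (fun q => a ((q.1 - q.2) / 2) * U q + b ((q.1 - q.2) / 2) * W q) p :=
  (doubleIntegral_add (continuousOn_volterra_integrand ha hU)
    (continuousOn_volterra_integrand hb hW) hp).symm

lemma exp_div_four_bound_le {L m : ℝ} (hL : 0 ≤ L) (hm : 0 ≤ m) :
    Real.exp (L / 4) * (m / 2 + m * (Real.exp (L / 4) * (L / 2)) / 4) ≤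
      Real.exp (2 * L) * (1 + L * Real.exp (2 * L)) * m := by
  have hexp : Real.exp (L / 4) ≤ Real.exp (2 * L) := Real.exp_le_exp.2 (by linarith)
  have hE := (Real.exp_pos (2 * L)).le
  calc Real.exp (L / 4) * (m / 2 + m * (Real.exp (L / 4) * (L / 2)) / 4)
      ≤ Real.exp (2 * L) * (m / 2 + m * (Real.exp (2 * L) * (L / 2)) / 4) := by gcongr
    _ ≤ _ := by nlinarith [mul_nonneg hE hm, mul_nonneg (mul_nonneg hE hE) (mul_nonneg hL hm)]

end GainKernel

open GainKernel

theorem kernel_time_derivative_existence_bound_general (lambdaBar : ℝ)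
    (lam μ : ℝ → ℝ)
    (hlam_cont : ContinuousOn lam (Set.Icc 0 1))
    (hμ_cont : ContinuousOn μ (Set.Icc 0 1))
    (hlam_bnd : ∀ x ∈ Set.Icc (0:ℝ) 1, |lam x| ≤ lambdaBar)
    (G : ℝ × ℝ → ℝ) (hG_cont : ContinuousOn G Dtri)
    (hG_eq : ∀ p ∈ Dtri,
      G p = -(1 / 4) * (∫ s in p.2..p.1, lam (s / 2)) +
        (1 / 4) * ∫ σ in p.2..p.1, ∫ s in (0:ℝ)..p.2, lam ((σ - s) / 2) * G (σ, s)) :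
    ∃ H : ℝ × ℝ → ℝ,
      ContinuousOn H Dtri ∧
      (∀ p ∈ Dtri,
        H p = -(1 / 4) * (∫ s in p.2..p.1, μ (s / 2)) +
          (1 / 4) * ∫ σ in p.2..p.1, ∫ s in (0:ℝ)..p.2,
            (μ ((σ - s) / 2) * G (σ, s) + lam ((σ - s) / 2) * H (σ, s))) ∧
      (∀ μBar : ℝ, (∀ x ∈ Set.Icc (0:ℝ) 1, |μ x| ≤ μBar) →
        ∀ p ∈ Dtri,
          |H p| ≤ Real.exp (2 * lambdaBar) * (1 + lambdaBar * Real.exp (2 * lambdaBar)) * μBar) ∧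
      (∀ H' : ℝ × ℝ → ℝ, ContinuousOn H' Dtri →
        (∀ p ∈ Dtri,
          H' p = -(1 / 4) * (∫ s in p.2..p.1, μ (s / 2)) +
            (1 / 4) * ∫ σ in p.2..p.1, ∫ s in (0:ℝ)..p.2,
              (μ ((σ - s) / 2) * G (σ, s) + lam ((σ - s) / 2) * H' (σ, s))) →
        Set.EqOn H H' Dtri) := by
  have hL : 0 ≤ lambdaBar := (abs_nonneg _).trans (hlam_bnd 0 ⟨le_rfl, zero_le_one⟩)
  -- The integral expressions in the statement unfold to `forcing` and `volterra`/`doubleIntegral`.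
  have hG_bnd : ∀ p ∈ Dtri, |G p| ≤ Real.exp (lambdaBar / 4) * (lambdaBar / 2) :=
    fun p hp => abs_le_of_solution (f := forcing lam) hlam_cont hlam_bnd hG_cont hG_eq
      (fun _ hq => abs_forcing_le hlam_bnd hq) hp
  set f : ℝ × ℝ → ℝ := fun p => forcing μ p + volterra μ G p
  have hsplit {W : ℝ × ℝ → ℝ} (hW : ContinuousOn W Dtri) {p : ℝ × ℝ} (hp : p ∈ Dtri) :
      f p + volterra lam W p = forcing μ p + doubleIntegral
        (fun q => μ ((q.1 - q.2) / 2) * G q + lam ((q.1 - q.2) / 2) * W q) p := by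
    rw [add_assoc, volterra_add_volterra hμ_cont hlam_cont hG_cont hW hp]
  obtain ⟨H, hH_cont, hH⟩ := exists_solution (f := f) hlam_cont
    ((continuousOn_forcing hμ_cont).add (continuousOn_volterra hμ_cont hG_cont))
  refine ⟨H, hH_cont, fun p hp => (hH p hp).trans (hsplit hH_cont hp),
    fun μBar hμ p hp => ?_, fun H' hH'_cont hH' => ?_⟩
  · have hμ0 : 0 ≤ μBar := (abs_nonneg _).trans (hμ 0 ⟨le_rfl, zero_le_one⟩)
    have hf (q : ℝ × ℝ) (hq : q ∈ Dtri) :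
        |f q| ≤ μBar / 2 + μBar * (Real.exp (lambdaBar / 4) * (lambdaBar / 2)) / 4 :=
      (abs_add_le _ _).trans (add_le_add (abs_forcing_le hμ hq)
        (abs_volterra_le_of_abs_le hμ (by positivity) hG_bnd hq))
    exact (abs_le_of_solution hlam_cont hlam_bnd hH_cont hH hf hp).trans
      (exp_div_four_bound_le hL hμ0)
  · exact eqOn_of_solution hlam_cont hH_cont hH'_cont hH fun p hp =>
      (hH' p hp).trans (hsplit hH'_cont hp).symm

/-- Existence, uniqueness and bound for the time derivative of the gain kernel:
the linear integral equation for `H` (the integral-equation form of `k̆_t`) has a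
unique continuous solution on `D`, satisfying `sup_D |H| ≤ M sup |μ|` with
`M = e^{2λ̄}(1 + λ̄ e^{2λ̄})`. -/
theorem kernel_time_derivative_existence_bound (lambdaBar : ℝ) (hlam : 0 < lambdaBar)
    (lam μ : ℝ → ℝ)
    (hlam_cont : ContinuousOn lam (Set.Icc 0 1))
    (hμ_cont : ContinuousOn μ (Set.Icc 0 1))
    (hlam_bnd : ∀ x ∈ Set.Icc (0:ℝ) 1, |lam x| ≤ lambdaBar)
    (G : ℝ × ℝ → ℝ) (hG_cont : ContinuousOn G Dtri)
    (hG_eq : ∀ p ∈ Dtri,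
      G p = -(1 / 4) * (∫ s in p.2..p.1, lam (s / 2)) +
        (1 / 4) * ∫ σ in p.2..p.1, ∫ s in (0:ℝ)..p.2, lam ((σ - s) / 2) * G (σ, s)) :
    ∃ H : ℝ × ℝ → ℝ,
      ContinuousOn H Dtri ∧
      (∀ p ∈ Dtri,
        H p = -(1 / 4) * (∫ s in p.2..p.1, μ (s / 2)) +
          (1 / 4) * ∫ σ in p.2..p.1, ∫ s in (0:ℝ)..p.2,
            (μ ((σ - s) / 2) * G (σ, s) + lam ((σ - s) / 2) * H (σ, s))) ∧
      (∀ μBar : ℝ, (∀ x ∈ Set.Icc (0:ℝ) 1, |μ x| ≤ μBar) →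
        ∀ p ∈ Dtri,
          |H p| ≤ Real.exp (2 * lambdaBar) * (1 + lambdaBar * Real.exp (2 * lambdaBar)) * μBar) ∧
      (∀ H' : ℝ × ℝ → ℝ, ContinuousOn H' Dtri →
        (∀ p ∈ Dtri,
          H' p = -(1 / 4) * (∫ s in p.2..p.1, μ (s / 2)) +
            (1 / 4) * ∫ σ in p.2..p.1, ∫ s in (0:ℝ)..p.2,
              (μ ((σ - s) / 2) * G (σ, s) + lam ((σ - s) / 2) * H' (σ, s))) →
        Set.EqOn H H' Dtri) :=
  kernel_time_derivative_existence_bound_general lambdaBar lam μ hlam_cont hμ_cont hlam_bnd G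
    hG_cont hG_eq
end

section
/- (Lipschitz continuity of the kernel-time-derivative operator.) Let λ̄, ᾱ > 0. For i ∈ {1,2}, let λᵢ, μᵢ : [0,1] → ℝ be continuous with sup |λᵢ| ≤ λ̄ and sup |μᵢ| ≤ ᾱ, let Gᵢ be the unique continuous solution on D = {(ξ,η) : 0 ≤ η ≤ ξ, ξ + η ≤ 2} of Gᵢ(ξ,η) = −(1/4)∫_η^ξ λᵢ(s/2) ds + (1/4)∫_η^ξ ∫₀^η λᵢ((σ−s)/2) Gᵢ(σ,s) ds dσ, and let Hᵢ be the unique continuous solution of Hᵢ(ξ,η) = −(1/4)∫_η^ξ μᵢ(s/2) ds + (1/4)∫_η^ξ ∫₀^η [ μᵢ((σ−s)/2)·Gᵢ(σ,s) + λᵢ((σ−s)/2)·Hᵢ(σ,s) ] ds dσ. Then there exists a constant A > 0, depending only on λ̄ and ᾱ, such that sup_D |H₁ − H₂| ≤ A·( sup_{[0,1]} |λ₁ − λ₂| + sup_{[0,1]} |μ₁ − μ₂| ). -/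
/-!
Each of `G₁`, `H₁`, `G₁ - G₂`, `H₁ - H₂` solves a Volterra equation `u = -¼ ∫ f(s/2) + ¼ ∬ Φ`
with `|Φ| ≤ a + b |u|` on `D`; for the differences this is linearity, with `f` the difference of
the data. Because `∫_η^ξ ∫_0^η e^{bσs} ≤ e^{bξη} / b`, the integral term contracts by `1/4` in the
weighted norm `sup_D |u| e^{-bξη}`, which gives the Gronwall bound `|u| ≤ C_b (sup |f| + a)`.
Taking the four kernels in turn, each bound enters the constant `a` of the next, and the last one
is linear in `sup |λ₁ - λ₂| + sup |μ₁ - μ₂|`.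
-/

open Set Real MeasureTheory

theorem nonneg_of_forall_abs_le {α : Type*} {f : α → ℝ} {s : Set α} {M : ℝ} {x : α} (hx : x ∈ s)
    (h : ∀ y ∈ s, |f y| ≤ M) : 0 ≤ M :=
  (abs_nonneg _).trans (h x hx)

theorem isClosed_Dtri : IsClosed Dtri :=
  (isClosed_le continuous_const continuous_snd).inter
    ((isClosed_le continuous_snd continuous_fst).inter
      (isClosed_le (continuous_fst.add continuous_snd) continuous_const))

theorem isCompact_Dtri : IsCompact Dtri :=
  (isCompact_Icc.prod isCompact_Icc : IsCompact (Icc (0 : ℝ) 2 ×ˢ Icc (0 : ℝ) 2))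
    |>.of_isClosed_subset isClosed_Dtri
      fun _ ⟨h₁, h₂, h₃⟩ => ⟨⟨by linarith, by linarith⟩, ⟨h₁, by linarith⟩⟩

theorem zero_mem_Dtri : ((0, 0) : ℝ × ℝ) ∈ Dtri := ⟨le_rfl, le_rfl, by norm_num⟩

theorem Icc_prod_Icc_subset_Dtri {p : ℝ × ℝ} (hp : p ∈ Dtri) :
    Icc p.2 p.1 ×ˢ Icc 0 p.2 ⊆ Dtri := fun _ ⟨⟨hσ, hσ'⟩, hs, hs'⟩ =>
  ⟨hs, hs'.trans hσ, by linarith [hp.2.2]⟩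

theorem half_sub_mem_Icc_of_mem_Dtri {q : ℝ × ℝ} (hq : q ∈ Dtri) :
    (q.1 - q.2) / 2 ∈ Icc (0 : ℝ) 1 :=
  ⟨by linarith [hq.2.1], by linarith [hq.1, hq.2.2]⟩

theorem mul_le_one_of_mem_Dtri {q : ℝ × ℝ} (hq : q ∈ Dtri) : q.1 * q.2 ≤ 1 := by
  obtain ⟨h₁, h₂, h₃⟩ := hq
  nlinarith [sq_nonneg (q.1 - q.2)]

theorem continuousOn_comp_half_sub {f : ℝ → ℝ} (hf : ContinuousOn f (Icc 0 1)) :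
    ContinuousOn (fun q : ℝ × ℝ => f ((q.1 - q.2) / 2)) Dtri :=
  hf.comp (by fun_prop) fun _ => half_sub_mem_Icc_of_mem_Dtri

theorem continuousOn_intervalIntegral_of_continuousOn_prod {F : ℝ × ℝ → ℝ} {a b c d : ℝ}
    (hab : a ≤ b) (hcd : c ≤ d) (hF : ContinuousOn F (Icc a b ×ˢ Icc c d)) :
    ContinuousOn (fun x => ∫ y in c..d, F (x, y)) (Icc a b) := by
  -- clamping onto the rectangle extends `F` continuously to the whole plane
  let clamp : ℝ × ℝ → ℝ × ℝ := fun q => (projIcc a b hab q.1, projIcc c d hcd q.2)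
  have hF' : Continuous (F ∘ clamp) :=
    hF.comp_continuous (by fun_prop) fun q => ⟨(projIcc a b hab q.1).2, (projIcc c d hcd q.2).2⟩
  refine (intervalIntegral.continuous_parametric_intervalIntegral_of_continuous'
    (μ := volume) (f := fun x y => (F ∘ clamp) (x, y)) hF' c d).continuousOn.congr fun x hx => ?_
  refine intervalIntegral.integral_congr fun y hy => ?_
  rw [uIcc_of_le hcd] at hy
  simp [clamp, projIcc_of_mem _ hx, projIcc_of_mem _ hy]

noncomputable def volterraRHS (f : ℝ → ℝ) (Φ : ℝ × ℝ → ℝ) (p : ℝ × ℝ) : ℝ :=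
  -(1 / 4) * (∫ s in p.2..p.1, f (s / 2)) +
    (1 / 4) * ∫ σ in p.2..p.1, ∫ s in (0:ℝ)..p.2, Φ (σ, s)

theorem intervalIntegrable_comp_half {f : ℝ → ℝ} (hf : ContinuousOn f (Icc 0 1))
    {p : ℝ × ℝ} (hp : p ∈ Dtri) : IntervalIntegrable (fun s => f (s / 2)) volume p.2 p.1 := by
  refine ContinuousOn.intervalIntegrable (hf.comp (by fun_prop) fun s hs => ?_)
  rw [uIcc_of_le hp.2.1] at hs
  exact ⟨by linarith [hp.1, hs.1], by linarith [hp.1, hp.2.2, hs.2]⟩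

theorem sub_eq_volterraRHS_sub {f₁ f₂ : ℝ → ℝ} {u₁ u₂ Φ₁ Φ₂ : ℝ × ℝ → ℝ}
    (hf₁ : ContinuousOn f₁ (Icc 0 1)) (hf₂ : ContinuousOn f₂ (Icc 0 1))
    (hΦ₁ : ContinuousOn Φ₁ Dtri) (hΦ₂ : ContinuousOn Φ₂ Dtri)
    (heq₁ : ∀ p ∈ Dtri, u₁ p = volterraRHS f₁ Φ₁ p)
    (heq₂ : ∀ p ∈ Dtri, u₂ p = volterraRHS f₂ Φ₂ p) :
    ∀ p ∈ Dtri, u₁ p - u₂ p = volterraRHS (f₁ - f₂) (Φ₁ - Φ₂) p := by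
  intro p hp
  have hsub := Icc_prod_Icc_subset_Dtri hp
  have hinner {Φ : ℝ × ℝ → ℝ} (hΦ : ContinuousOn Φ Dtri) (σ : ℝ) (hσ : σ ∈ Icc p.2 p.1) :
      IntervalIntegrable (fun s => Φ (σ, s)) volume 0 p.2 := by
    refine ContinuousOn.intervalIntegrable (hΦ.comp (by fun_prop) fun s hs => hsub ⟨hσ, ?_⟩)
    rwa [uIcc_of_le hp.1] at hs
  have houter {Φ : ℝ × ℝ → ℝ} (hΦ : ContinuousOn Φ Dtri) :
      IntervalIntegrable (fun σ => ∫ s in (0:ℝ)..p.2, Φ (σ, s)) volume p.2 p.1 := by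
    refine ContinuousOn.intervalIntegrable ?_
    rw [uIcc_of_le hp.2.1]
    exact continuousOn_intervalIntegral_of_continuousOn_prod hp.2.1 hp.1 (hΦ.mono hsub)
  have hdouble : ∫ σ in p.2..p.1, ∫ s in (0:ℝ)..p.2, (Φ₁ (σ, s) - Φ₂ (σ, s)) =
      (∫ σ in p.2..p.1, ∫ s in (0:ℝ)..p.2, Φ₁ (σ, s)) -
        ∫ σ in p.2..p.1, ∫ s in (0:ℝ)..p.2, Φ₂ (σ, s) := by
    rw [← intervalIntegral.integral_sub (houter hΦ₁) (houter hΦ₂)]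
    refine intervalIntegral.integral_congr fun σ hσ => ?_
    rw [uIcc_of_le hp.2.1] at hσ
    exact intervalIntegral.integral_sub (hinner hΦ₁ σ hσ) (hinner hΦ₂ σ hσ)
  simp only [heq₁ p hp, heq₂ p hp, volterraRHS, hdouble, Pi.sub_apply, intervalIntegral.integral_sub
    (intervalIntegrable_comp_half hf₁ hp) (intervalIntegrable_comp_half hf₂ hp)]
  ring

theorem abs_integral_comp_half_le {f : ℝ → ℝ} {M : ℝ} (hf : ∀ x ∈ Icc 0 1, |f x| ≤ M)
    {p : ℝ × ℝ} (hp : p ∈ Dtri) : |∫ s in p.2..p.1, f (s / 2)| ≤ 2 * M := by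
  have hM := nonneg_of_forall_abs_le (left_mem_Icc.2 zero_le_one) hf
  have h := intervalIntegral.norm_integral_le_of_norm_le_const (a := p.2) (b := p.1)
    (f := fun s => f (s / 2)) (C := M) fun s hs => by
      rw [uIoc_of_le hp.2.1] at hs
      exact hf _ ⟨by linarith [hp.1, hs.1], by linarith [hp.1, hp.2.2, hs.2]⟩
  rw [Real.norm_eq_abs, abs_of_nonneg (sub_nonneg.2 hp.2.1)] at h
  nlinarith [hp.1, hp.2.2]

theorem abs_integral_integral_le_exp {F : ℝ × ℝ → ℝ} {η ξ b B : ℝ} (hη : 0 ≤ η) (hηξ : η ≤ ξ)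
    (hb : 0 < b) (hB : 0 ≤ B)
    (hF : ∀ σ ∈ Ioc η ξ, ∀ s ∈ Ioc 0 η, |F (σ, s)| ≤ B * exp (b * σ * s)) :
    |∫ σ in η..ξ, ∫ s in (0:ℝ)..η, F (σ, s)| ≤ B * exp (b * ξ * η) / b := by
  have hinner : ∀ σ ∈ Ioc η ξ, ‖∫ s in (0:ℝ)..η, F (σ, s)‖ ≤ B * η * exp (b * η * σ) := by
    intro σ hσ
    have h := intervalIntegral.norm_integral_le_of_norm_le_const (a := 0) (b := η)
      (f := fun s => F (σ, s)) (C := B * exp (b * η * σ)) fun s hs => by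
        rw [uIoc_of_le hη] at hs
        refine (hF σ hσ s hs).trans (mul_le_mul_of_nonneg_left (exp_le_exp.2 ?_) hB)
        nlinarith [mul_le_mul_of_nonneg_left hs.2 (mul_nonneg hb.le (hη.trans hσ.1.le))]
    rwa [sub_zero, abs_of_nonneg hη, mul_right_comm] at h
  have hderiv : ∀ σ ∈ uIcc η ξ, HasDerivAt (fun σ => B / b * exp (b * η * σ))
      (B * η * exp (b * η * σ)) σ := fun σ _ => by
    have h := (((hasDerivAt_id' σ).const_mul (b * η)).exp.const_mul (B / b))
    rw [mul_one] at h
    exact h.congr_deriv (by field_simp)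
  have hcont : Continuous fun σ => B * η * exp (b * η * σ) := by fun_prop
  have h := intervalIntegral.norm_integral_le_of_norm_le hηξ
    (Filter.Eventually.of_forall hinner) (hcont.intervalIntegrable (μ := volume) _ _)
  rw [intervalIntegral.integral_eq_sub_of_hasDerivAt hderiv (hcont.intervalIntegrable _ _),
    Real.norm_eq_abs] at h
  rw [mul_right_comm b ξ η]
  linarith [show 0 ≤ B / b * exp (b * η * η) by positivity,
    div_mul_eq_mul_div B b (exp (b * η * ξ))]

theorem abs_volterraRHS_le {f : ℝ → ℝ} {Φ : ℝ × ℝ → ℝ} {M b B : ℝ} (hb : 0 < b) (hB : 0 ≤ B)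
    (hf : ∀ x ∈ Icc 0 1, |f x| ≤ M) (hΦ : ∀ q ∈ Dtri, |Φ q| ≤ B * exp (b * q.1 * q.2))
    {p : ℝ × ℝ} (hp : p ∈ Dtri) :
    |volterraRHS f Φ p| ≤ M / 2 + B * exp (b * p.1 * p.2) / (4 * b) := by
  have hsingle := abs_integral_comp_half_le hf hp
  have hdouble := abs_integral_integral_le_exp hp.1 hp.2.1 hb hB fun σ hσ s hs =>
    hΦ (σ, s) (Icc_prod_Icc_subset_Dtri hp ⟨Ioc_subset_Icc_self hσ, Ioc_subset_Icc_self hs⟩)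
  calc |volterraRHS f Φ p|
      ≤ 1 / 4 * |∫ s in p.2..p.1, f (s / 2)| +
          1 / 4 * |∫ σ in p.2..p.1, ∫ s in (0:ℝ)..p.2, Φ (σ, s)| := by
        refine (abs_add_le _ _).trans_eq ?_
        rw [abs_mul, abs_mul, abs_neg, abs_of_pos (by norm_num : (0 : ℝ) < 1 / 4)]
    _ ≤ 1 / 4 * (2 * M) + 1 / 4 * (B * exp (b * p.1 * p.2) / b) := by gcongr
    _ = M / 2 + B * exp (b * p.1 * p.2) / (4 * b) := by field_simp; ring

theorem le_of_mul_le_half_add_mul_div {N M a b e : ℝ} (hb : 0 < b) (hM : 0 ≤ M) (he : 1 ≤ e)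
    (h : N * e ≤ M / 2 + (a + b * N) * e / (4 * b)) : N ≤ 2 / 3 * M + a / (3 * b) := by
  have h' : N * e ≤ (M / 2 + (a + b * N) / (4 * b)) * e := by
    linarith [mul_le_mul_of_nonneg_left he (by positivity : 0 ≤ M / 2),
      div_mul_eq_mul_div (a + b * N) (4 * b) e]
  have hsplit : (a + b * N) / (4 * b) = a / (3 * b) * (3 / 4) + N / 4 := by field_simp
  linarith [le_of_mul_le_mul_right h' (by positivity)]

noncomputable def gronwallConst (b : ℝ) : ℝ := (1 + b⁻¹) * exp b

theorem gronwallConst_pos {b : ℝ} (hb : 0 < b) : 0 < gronwallConst b := by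
  unfold gronwallConst; positivity

theorem abs_le_gronwallConst_of_eq_volterraRHS {f : ℝ → ℝ} {u Φ : ℝ × ℝ → ℝ} {M a b : ℝ}
    (ha : 0 ≤ a) (hb : 0 < b) (hu : ContinuousOn u Dtri) (hf : ∀ x ∈ Icc 0 1, |f x| ≤ M)
    (hΦ : ∀ q ∈ Dtri, |Φ q| ≤ a + b * |u q|) (heq : ∀ p ∈ Dtri, u p = volterraRHS f Φ p) :
    ∀ p ∈ Dtri, |u p| ≤ gronwallConst b * (M + a) := by
  have hM := nonneg_of_forall_abs_le (left_mem_Icc.2 zero_le_one) hf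
  have hweight {q : ℝ × ℝ} (hq : q ∈ Dtri) : 1 ≤ exp (b * q.1 * q.2) :=
    one_le_exp (mul_nonneg (mul_nonneg hb.le (hq.1.trans hq.2.1)) hq.1)
  obtain ⟨p₀, hp₀, hmax⟩ := isCompact_Dtri.exists_isMaxOn ⟨_, zero_mem_Dtri⟩
    (hu.abs.mul (by fun_prop : Continuous fun q : ℝ × ℝ => exp (-(b * q.1 * q.2))).continuousOn)
  set N := |u p₀| * exp (-(b * p₀.1 * p₀.2)) with hN_def
  have hN : ∀ q ∈ Dtri, |u q| ≤ N * exp (b * q.1 * q.2) := fun q hq => by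
    have h : |u q| * exp (-(b * q.1 * q.2)) ≤ N := hmax hq
    rwa [exp_neg, ← div_eq_mul_inv, div_le_iff₀ (exp_pos _)] at h
  have hN_eq : |u p₀| = N * exp (b * p₀.1 * p₀.2) := by
    rw [hN_def, mul_assoc, ← exp_add, neg_add_cancel, exp_zero, mul_one]
  have hΦN : ∀ q ∈ Dtri, |Φ q| ≤ (a + b * N) * exp (b * q.1 * q.2) := fun q hq => by
    nlinarith [hΦ q hq, mul_le_mul_of_nonneg_left (hN q hq) hb.le,
      mul_le_mul_of_nonneg_left (hweight hq) ha]
  have hN_le : N ≤ 2 / 3 * M + a / (3 * b) := by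
    have h := abs_volterraRHS_le hb (by positivity) hf hΦN hp₀
    rw [← heq p₀ hp₀, hN_eq] at h
    exact le_of_mul_le_half_add_mul_div hb hM (hweight hp₀) h
  intro p hp
  have hinv : a / (3 * b) ≤ b⁻¹ * a := by
    rw [div_eq_mul_inv, mul_inv, mul_comm a]
    nlinarith [inv_pos.2 hb, mul_nonneg (inv_pos.2 hb).le ha]
  calc |u p| ≤ N * exp (b * p.1 * p.2) := hN p hp
    _ ≤ (2 / 3 * M + a / (3 * b)) * exp b := by
        gcongr
        nlinarith [mul_le_one_of_mem_Dtri hp]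
    _ ≤ (1 + b⁻¹) * (M + a) * exp b := by
        gcongr
        nlinarith [mul_nonneg (inv_pos.2 hb).le hM]
    _ = gronwallConst b * (M + a) := by rw [gronwallConst]; ring

theorem abs_mul_sub_mul_le {x₁ x₂ y₁ y₂ δ X Y : ℝ} (hx : |x₁ - x₂| ≤ δ) (hx₂ : |x₂| ≤ X)
    (hy₁ : |y₁| ≤ Y) : |x₁ * y₁ - x₂ * y₂| ≤ δ * Y + X * |y₁ - y₂| := by
  rw [show x₁ * y₁ - x₂ * y₂ = (x₁ - x₂) * y₁ + x₂ * (y₁ - y₂) by ring]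
  refine (abs_add_le _ _).trans ?_
  rw [abs_mul, abs_mul]
  gcongr
  exact (abs_nonneg _).trans hx

section KernelEstimates

variable {lam lam₁ lam₂ μ μ₁ μ₂ : ℝ → ℝ} {G G₁ G₂ H H₁ H₂ : ℝ × ℝ → ℝ}
  {lambdaBar alphaBar BG BH DG dLam dMu : ℝ}

theorem abs_kernel_le (hpos : 0 < lambdaBar) (hlam : ∀ x ∈ Icc 0 1, |lam x| ≤ lambdaBar)
    (hG : ContinuousOn G Dtri)
    (heq : ∀ p ∈ Dtri, G p = volterraRHS lam (fun q => lam ((q.1 - q.2) / 2) * G q) p) :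
    ∀ q ∈ Dtri, |G q| ≤ gronwallConst lambdaBar * lambdaBar := by
  simpa only [add_zero] using abs_le_gronwallConst_of_eq_volterraRHS le_rfl hpos hG hlam
    (fun q hq => by
      rw [abs_mul, zero_add]; gcongr; exact hlam _ (half_sub_mem_Icc_of_mem_Dtri hq)) heq

theorem abs_kernelDeriv_le (hpos : 0 < lambdaBar) (hlam : ∀ x ∈ Icc 0 1, |lam x| ≤ lambdaBar)
    (hμ : ∀ x ∈ Icc 0 1, |μ x| ≤ alphaBar) (hGBG : ∀ q ∈ Dtri, |G q| ≤ BG)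
    (hH : ContinuousOn H Dtri)
    (heq : ∀ p ∈ Dtri, H p = volterraRHS μ
      (fun q => μ ((q.1 - q.2) / 2) * G q + lam ((q.1 - q.2) / 2) * H q) p) :
    ∀ q ∈ Dtri, |H q| ≤ gronwallConst lambdaBar * (alphaBar + alphaBar * BG) := by
  have hα := nonneg_of_forall_abs_le (left_mem_Icc.2 zero_le_one) hμ
  have hBG := nonneg_of_forall_abs_le zero_mem_Dtri hGBG
  refine abs_le_gronwallConst_of_eq_volterraRHS (by positivity) hpos hH hμ (fun q hq => ?_) heq
  have hw := half_sub_mem_Icc_of_mem_Dtri hq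
  refine (abs_add_le _ _).trans ?_
  rw [abs_mul, abs_mul]
  gcongr
  exacts [hμ _ hw, hGBG q hq, hlam _ hw]

theorem abs_kernel_sub_le (hpos : 0 < lambdaBar) (hlam₂ : ∀ x ∈ Icc 0 1, |lam₂ x| ≤ lambdaBar)
    (hclam₁ : ContinuousOn lam₁ (Icc 0 1)) (hclam₂ : ContinuousOn lam₂ (Icc 0 1))
    (hdlam : ∀ x ∈ Icc 0 1, |lam₁ x - lam₂ x| ≤ dLam) (hG₁BG : ∀ q ∈ Dtri, |G₁ q| ≤ BG)
    (hG₁ : ContinuousOn G₁ Dtri) (hG₂ : ContinuousOn G₂ Dtri)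
    (heq₁ : ∀ p ∈ Dtri, G₁ p = volterraRHS lam₁ (fun q => lam₁ ((q.1 - q.2) / 2) * G₁ q) p)
    (heq₂ : ∀ p ∈ Dtri, G₂ p = volterraRHS lam₂ (fun q => lam₂ ((q.1 - q.2) / 2) * G₂ q) p) :
    ∀ q ∈ Dtri, |G₁ q - G₂ q| ≤ gronwallConst lambdaBar * (dLam + dLam * BG) := by
  have hd := nonneg_of_forall_abs_le (left_mem_Icc.2 zero_le_one) hdlam
  have hBG := nonneg_of_forall_abs_le zero_mem_Dtri hG₁BG
  refine abs_le_gronwallConst_of_eq_volterraRHS (by positivity) hpos (hG₁.sub hG₂) hdlam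
    (fun q hq => ?_) (sub_eq_volterraRHS_sub hclam₁ hclam₂
      ((continuousOn_comp_half_sub hclam₁).mul hG₁) ((continuousOn_comp_half_sub hclam₂).mul hG₂)
      heq₁ heq₂)
  have hw := half_sub_mem_Icc_of_mem_Dtri hq
  exact abs_mul_sub_mul_le (hdlam _ hw) (hlam₂ _ hw) (hG₁BG q hq)

theorem abs_kernelDeriv_sub_le (hpos : 0 < lambdaBar)
    (hlam₂ : ∀ x ∈ Icc 0 1, |lam₂ x| ≤ lambdaBar) (hμ₂ : ∀ x ∈ Icc 0 1, |μ₂ x| ≤ alphaBar)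
    (hclam₁ : ContinuousOn lam₁ (Icc 0 1)) (hclam₂ : ContinuousOn lam₂ (Icc 0 1))
    (hcμ₁ : ContinuousOn μ₁ (Icc 0 1)) (hcμ₂ : ContinuousOn μ₂ (Icc 0 1))
    (hdlam : ∀ x ∈ Icc 0 1, |lam₁ x - lam₂ x| ≤ dLam) (hdμ : ∀ x ∈ Icc 0 1, |μ₁ x - μ₂ x| ≤ dMu)
    (hG₁BG : ∀ q ∈ Dtri, |G₁ q| ≤ BG) (hH₁BH : ∀ q ∈ Dtri, |H₁ q| ≤ BH)
    (hGDG : ∀ q ∈ Dtri, |G₁ q - G₂ q| ≤ DG)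
    (hG₁ : ContinuousOn G₁ Dtri) (hG₂ : ContinuousOn G₂ Dtri)
    (hH₁ : ContinuousOn H₁ Dtri) (hH₂ : ContinuousOn H₂ Dtri)
    (heq₁ : ∀ p ∈ Dtri, H₁ p = volterraRHS μ₁
      (fun q => μ₁ ((q.1 - q.2) / 2) * G₁ q + lam₁ ((q.1 - q.2) / 2) * H₁ q) p)
    (heq₂ : ∀ p ∈ Dtri, H₂ p = volterraRHS μ₂
      (fun q => μ₂ ((q.1 - q.2) / 2) * G₂ q + lam₂ ((q.1 - q.2) / 2) * H₂ q) p) :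
    ∀ q ∈ Dtri, |H₁ q - H₂ q| ≤
      gronwallConst lambdaBar * (dMu + (dMu * BG + alphaBar * DG + dLam * BH)) := by
  have hdlam0 := nonneg_of_forall_abs_le (left_mem_Icc.2 zero_le_one) hdlam
  have hdμ0 := nonneg_of_forall_abs_le (left_mem_Icc.2 zero_le_one) hdμ
  have hα := nonneg_of_forall_abs_le (left_mem_Icc.2 zero_le_one) hμ₂
  have hBG := nonneg_of_forall_abs_le zero_mem_Dtri hG₁BG
  have hBH := nonneg_of_forall_abs_le zero_mem_Dtri hH₁BH
  have hDG := nonneg_of_forall_abs_le zero_mem_Dtri hGDG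
  refine abs_le_gronwallConst_of_eq_volterraRHS (by positivity) hpos (hH₁.sub hH₂) hdμ
    (fun q hq => ?_) (sub_eq_volterraRHS_sub hcμ₁ hcμ₂
      (((continuousOn_comp_half_sub hcμ₁).mul hG₁).add
        ((continuousOn_comp_half_sub hclam₁).mul hH₁))
      (((continuousOn_comp_half_sub hcμ₂).mul hG₂).add
        ((continuousOn_comp_half_sub hclam₂).mul hH₂))
      heq₁ heq₂)
  have hw := half_sub_mem_Icc_of_mem_Dtri hq
  have hμG := abs_mul_sub_mul_le (y₂ := G₂ q) (hdμ _ hw) (hμ₂ _ hw) (hG₁BG q hq)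
  have hlamH := abs_mul_sub_mul_le (y₂ := H₂ q) (hdlam _ hw) (hlam₂ _ hw) (hH₁BH q hq)
  have hαDG := mul_le_mul_of_nonneg_left (hGDG q hq) hα
  simp only [Pi.sub_apply, Pi.add_apply, Pi.mul_apply]
  rw [add_sub_add_comm]
  refine (abs_add_le _ _).trans ?_
  linarith

end KernelEstimates

/-- Lipschitz continuity of the kernel-time-derivative operator
`𝒦₁ : (λ̂, λ̂_t) ↦ k̆_t`: there is a constant `A > 0`, depending only on `λ̄` and `ᾱ`,
such that `sup_D |H₁ - H₂| ≤ A (sup |λ₁ - λ₂| + sup |μ₁ - μ₂|)`. -/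
theorem kernel_time_derivative_lipschitz (lambdaBar alphaBar : ℝ)
    (hlam : 0 < lambdaBar) (halpha : 0 < alphaBar) :
    ∃ A : ℝ, 0 < A ∧
      ∀ (lam₁ lam₂ μ₁ μ₂ : ℝ → ℝ) (G₁ G₂ H₁ H₂ : ℝ × ℝ → ℝ),
        ContinuousOn lam₁ (Set.Icc 0 1) → ContinuousOn lam₂ (Set.Icc 0 1) →
        ContinuousOn μ₁ (Set.Icc 0 1) → ContinuousOn μ₂ (Set.Icc 0 1) →
        (∀ x ∈ Set.Icc (0:ℝ) 1, |lam₁ x| ≤ lambdaBar) →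
        (∀ x ∈ Set.Icc (0:ℝ) 1, |lam₂ x| ≤ lambdaBar) →
        (∀ x ∈ Set.Icc (0:ℝ) 1, |μ₁ x| ≤ alphaBar) →
        (∀ x ∈ Set.Icc (0:ℝ) 1, |μ₂ x| ≤ alphaBar) →
        ContinuousOn G₁ Dtri → ContinuousOn G₂ Dtri →
        (∀ p ∈ Dtri,
          G₁ p = -(1 / 4) * (∫ s in p.2..p.1, lam₁ (s / 2)) +
            (1 / 4) * ∫ σ in p.2..p.1, ∫ s in (0:ℝ)..p.2, lam₁ ((σ - s) / 2) * G₁ (σ, s)) →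
        (∀ p ∈ Dtri,
          G₂ p = -(1 / 4) * (∫ s in p.2..p.1, lam₂ (s / 2)) +
            (1 / 4) * ∫ σ in p.2..p.1, ∫ s in (0:ℝ)..p.2, lam₂ ((σ - s) / 2) * G₂ (σ, s)) →
        ContinuousOn H₁ Dtri → ContinuousOn H₂ Dtri →
        (∀ p ∈ Dtri,
          H₁ p = -(1 / 4) * (∫ s in p.2..p.1, μ₁ (s / 2)) +
            (1 / 4) * ∫ σ in p.2..p.1, ∫ s in (0:ℝ)..p.2,
              (μ₁ ((σ - s) / 2) * G₁ (σ, s) + lam₁ ((σ - s) / 2) * H₁ (σ, s))) →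
        (∀ p ∈ Dtri,
          H₂ p = -(1 / 4) * (∫ s in p.2..p.1, μ₂ (s / 2)) +
            (1 / 4) * ∫ σ in p.2..p.1, ∫ s in (0:ℝ)..p.2,
              (μ₂ ((σ - s) / 2) * G₂ (σ, s) + lam₂ ((σ - s) / 2) * H₂ (σ, s))) →
        ∀ dLam dMu : ℝ,
          (∀ x ∈ Set.Icc (0:ℝ) 1, |lam₁ x - lam₂ x| ≤ dLam) →
          (∀ x ∈ Set.Icc (0:ℝ) 1, |μ₁ x - μ₂ x| ≤ dMu) →
          ∀ p ∈ Dtri, |H₁ p - H₂ p| ≤ A * (dLam + dMu) := by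
  set C := gronwallConst lambdaBar
  have hC : 0 < C := gronwallConst_pos hlam
  set BG := C * lambdaBar
  set BH := C * (alphaBar + alphaBar * BG)
  refine ⟨C * (1 + BG + BH + alphaBar * C * (1 + BG)), by positivity, ?_⟩
  intro lam₁ lam₂ μ₁ μ₂ G₁ G₂ H₁ H₂ hclam₁ hclam₂ hcμ₁ hcμ₂ hlam₁ hlam₂ hμ₁ hμ₂
    hcG₁ hcG₂ heqG₁ heqG₂ hcH₁ hcH₂ heqH₁ heqH₂ dLam dMu hdlam hdmu p hp
  have hG₁ := abs_kernel_le hlam hlam₁ hcG₁ heqG₁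
  have hH₁ := abs_kernelDeriv_le hlam hlam₁ hμ₁ hG₁ hcH₁ heqH₁
  have hdG := abs_kernel_sub_le hlam hlam₂ hclam₁ hclam₂ hdlam hG₁ hcG₁ hcG₂ heqG₁ heqG₂
  have hdH := abs_kernelDeriv_sub_le hlam hlam₂ hμ₂ hclam₁ hclam₂ hcμ₁ hcμ₂ hdlam hdmu hG₁ hH₁ hdG
    hcG₁ hcG₂ hcH₁ hcH₂ heqH₁ heqH₂
  have hdlam0 := nonneg_of_forall_abs_le (left_mem_Icc.2 zero_le_one) hdlam
  have hdmu0 := nonneg_of_forall_abs_le (left_mem_Icc.2 zero_le_one) hdmu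
  refine (hdH p hp).trans ?_
  rw [mul_assoc]
  gcongr
  nlinarith [mul_nonneg hdlam0 (by positivity : (0:ℝ) ≤ 1 + BG),
    mul_nonneg hdmu0 (by positivity : (0:ℝ) ≤ BH + alphaBar * C * (1 + BG))]
end

section
/- Let γ > 0, k̄, l̄ ≥ 0, let T = {(x,y) : 0 ≤ y ≤ x ≤ 1}, let k, l : T → ℝ be measurable with |k| ≤ k̄ and |l| ≤ l̄ on T, and let w ∈ L²(0,1). Define u(x) = w(x) + ∫₀^x l(x,y) w(y) dy, ψ(x) = w(x) − ∫_x^1 k(y,x) w(y) dy, and φ(x) = γ·u(x)·ψ(x)/(1 + ‖w‖²), where ‖w‖² = ∫₀¹ w(x)² dx. Then ∫₀¹ |φ(x)| dx ≤ γ·(1 + l̄)·(1 + k̄). -/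
/-!
On `(0,1]` with Lebesgue measure, a probability space, write `A = ∫ |w|` and `W = ∫ w²`, so that
`A² ≤ W` by Cauchy–Schwarz. The kernel bounds give `|u| ≤ |w| + l̄ A` and `|ψ| ≤ |w| + k̄ A`
pointwise, and integrating the product of these bounds yields
`∫ |u ψ| ≤ W + (l̄ + k̄ + l̄ k̄) A² ≤ (1 + l̄)(1 + k̄) W`. Finally `W / (1 + W) ≤ 1`.
-/

open MeasureTheory

/-- The triangle `T = {(x,y) : 0 ≤ y ≤ x ≤ 1}`. -/
def Ttri : Set (ℝ × ℝ) := {p | 0 ≤ p.2 ∧ p.2 ≤ p.1 ∧ p.1 ≤ 1}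

open Set

section ProbabilitySpace

variable {α : Type*} [MeasurableSpace α] {μ : Measure α} [IsProbabilityMeasure μ] {f : α → ℝ}

theorem sq_integral_abs_le_integral_sq (hf : MemLp f 2 μ) :
    (∫ x, |f x| ∂μ) ^ 2 ≤ ∫ x, f x ^ 2 ∂μ := by
  have h := ProbabilityTheory.variance_nonneg (fun x => ‖f x‖) μ
  rw [ProbabilityTheory.variance_eq_sub hf.norm] at h
  simpa [Real.norm_eq_abs, sq_abs] using h

theorem integral_abs_add_mul_abs_add (hf : MemLp f 2 μ) (a b : ℝ) :
    ∫ x, (|f x| + a) * (|f x| + b) ∂μ = ∫ x, f x ^ 2 ∂μ + (a + b) * ∫ x, |f x| ∂μ + a * b := by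
  have hexp : ∀ x, (|f x| + a) * (|f x| + b) = f x ^ 2 + ((a + b) * |f x| + a * b) := fun x => by
    rw [← sq_abs (f x)]; ring
  have habs : Integrable (fun x => (a + b) * |f x|) μ := (hf.integrable one_le_two).abs.const_mul _
  have hlin : Integrable (fun x => (a + b) * |f x| + a * b) μ := habs.add (integrable_const _)
  simp_rw [hexp]
  rw [integral_add hf.integrable_sq hlin, integral_add habs
    (integrable_const _), integral_const_mul, integral_const, probReal_univ, one_smul, add_assoc]

theorem integral_abs_add_mul_abs_add_le (hf : MemLp f 2 μ) {a b : ℝ} (ha : 0 ≤ a) (hb : 0 ≤ b) :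
    ∫ x, (|f x| + a * ∫ y, |f y| ∂μ) * (|f x| + b * ∫ y, |f y| ∂μ) ∂μ
      ≤ (1 + a) * (1 + b) * ∫ x, f x ^ 2 ∂μ := by
  have hCS := sq_integral_abs_le_integral_sq hf
  rw [integral_abs_add_mul_abs_add hf]
  nlinarith [mul_nonneg (add_nonneg (add_nonneg ha hb) (mul_nonneg ha hb)) (sub_nonneg.2 hCS)]

theorem integral_abs_mul_le_of_abs_le {u v : α → ℝ} (hf : MemLp f 2 μ)
    (hu : AEStronglyMeasurable u μ) (hv : AEStronglyMeasurable v μ) {a b : ℝ} (ha : 0 ≤ a)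
    (hb : 0 ≤ b) (hu_le : ∀ᵐ x ∂μ, |u x| ≤ |f x| + a * ∫ y, |f y| ∂μ)
    (hv_le : ∀ᵐ x ∂μ, |v x| ≤ |f x| + b * ∫ y, |f y| ∂μ) :
    Integrable (fun x => u x * v x) μ ∧
      ∫ x, |u x * v x| ∂μ ≤ (1 + a) * (1 + b) * ∫ x, f x ^ 2 ∂μ := by
  set A := ∫ y, |f y| ∂μ
  have hf_abs : MemLp (fun x => |f x|) 2 μ := hf.norm
  have hbound_int : Integrable (fun x => (|f x| + a * A) * (|f x| + b * A)) μ :=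
    (hf_abs.add (memLp_const (a * A))).integrable_mul (hf_abs.add (memLp_const (b * A)))
  have hle : ∀ᵐ x ∂μ, |u x * v x| ≤ (|f x| + a * A) * (|f x| + b * A) := by
    filter_upwards [hu_le, hv_le] with x hux hvx
    rw [abs_mul]
    exact mul_le_mul hux hvx (abs_nonneg _) ((abs_nonneg _).trans hux)
  have hint : Integrable (fun x => u x * v x) μ := hbound_int.mono' (hu.mul hv) hle
  exact ⟨hint, (integral_mono_ae hint.abs hbound_int hle).trans
    (integral_abs_add_mul_abs_add_le hf ha hb)⟩

end ProbabilitySpace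

theorem abs_setIntegral_mul_le_of_subset {α : Type*} [MeasurableSpace α] {μ : Measure α}
    {s t : Set α} (hs : MeasurableSet s) (hst : s ⊆ t) {K w : α → ℝ} {c : ℝ} (hc : 0 ≤ c)
    (hK : ∀ y ∈ s, |K y| ≤ c) (hw : IntegrableOn w t μ) :
    |∫ y in s, K y * w y ∂μ| ≤ c * ∫ y in t, |w y| ∂μ := calc
  _ ≤ ∫ y in s, c * |w y| ∂μ := by
    refine norm_integral_le_of_norm_le (f := fun y => K y * w y)
      ((hw.mono_set hst).abs.const_mul c) ?_
    refine (ae_restrict_iff' hs).2 (ae_of_all _ fun y hy => ?_)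
    rw [Real.norm_eq_abs, abs_mul]
    exact mul_le_mul_of_nonneg_right (hK y hy) (abs_nonneg _)
  _ = c * ∫ y in s, |w y| ∂μ := integral_const_mul _ _
  _ ≤ c * ∫ y in t, |w y| ∂μ := mul_le_mul_of_nonneg_left
    (setIntegral_mono_set hw.abs (ae_of_all _ fun _ => abs_nonneg _) hst.eventuallyLE) hc

theorem aestronglyMeasurable_setIntegral_slice {α β : Type*} [MeasurableSpace α]
    [MeasurableSpace β] {μ : Measure α} {ν : Measure β} [SFinite ν] {S : Set (α × β)}
    (hS : MeasurableSet S) {K : α × β → ℝ} (hK : Measurable K) {w : β → ℝ}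
    (hw : AEStronglyMeasurable w ν) :
    AEStronglyMeasurable (fun x => ∫ y in Prod.mk x ⁻¹' S, K (x, y) * w y ∂ν) μ := by
  refine ((hK.aestronglyMeasurable.mul (hw.comp_snd (μ := μ))).indicator hS).integral_prod_right'
    |>.congr (ae_of_all _ fun x => ?_)
  dsimp only
  rw [← integral_indicator (measurable_prodMk_left hS)]
  rfl

theorem intervalIntegral_zero_eq_setIntegral_Iic {x : ℝ} (h0 : 0 ≤ x) (h1 : x ≤ 1) (g : ℝ → ℝ) :
    ∫ y in (0:ℝ)..x, g y = ∫ y in Iic x, g y ∂(volume.restrict (Ioc 0 1)) := by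
  rw [intervalIntegral.integral_of_le h0, Measure.restrict_restrict measurableSet_Iic,
    Iic_inter_Ioc_of_le h1]

theorem intervalIntegral_one_eq_setIntegral_Ioi {x : ℝ} (h0 : 0 ≤ x) (h1 : x ≤ 1) (g : ℝ → ℝ) :
    ∫ y in x..1, g y = ∫ y in Ioi x, g y ∂(volume.restrict (Ioc 0 1)) := by
  rw [intervalIntegral.integral_of_le h1, Measure.restrict_restrict measurableSet_Ioi,
    inter_comm, Ioc_inter_Ioi, sup_of_le_right h0]

theorem aestronglyMeasurable_intervalIntegral_zero {K : ℝ × ℝ → ℝ} (hK : Measurable K)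
    {w : ℝ → ℝ} (hw : AEStronglyMeasurable w (volume.restrict (Ioc 0 1))) :
    AEStronglyMeasurable (fun x => ∫ y in (0:ℝ)..x, K (x, y) * w y)
      (volume.restrict (Ioc 0 1)) :=
  (aestronglyMeasurable_setIntegral_slice (measurableSet_le measurable_snd measurable_fst) hK
    hw).congr <| (ae_restrict_iff' measurableSet_Ioc).2 <| ae_of_all _ fun _ hx =>
    (intervalIntegral_zero_eq_setIntegral_Iic hx.1.le hx.2 _).symm

theorem aestronglyMeasurable_intervalIntegral_one {K : ℝ × ℝ → ℝ} (hK : Measurable K)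
    {w : ℝ → ℝ} (hw : AEStronglyMeasurable w (volume.restrict (Ioc 0 1))) :
    AEStronglyMeasurable (fun x => ∫ y in x..1, K (y, x) * w y)
      (volume.restrict (Ioc 0 1)) :=
  (aestronglyMeasurable_setIntegral_slice (measurableSet_lt measurable_fst measurable_snd)
    (hK.comp measurable_swap) hw).congr <| (ae_restrict_iff' measurableSet_Ioc).2 <|
    ae_of_all _ fun _ hx =>
    (intervalIntegral_one_eq_setIntegral_Ioi hx.1.le hx.2 _).symm

theorem abs_add_intervalIntegral_zero_le {K : ℝ × ℝ → ℝ} {c : ℝ} (hc : 0 ≤ c)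
    (hK : ∀ p ∈ Ttri, |K p| ≤ c) {w : ℝ → ℝ} (hw : IntegrableOn w (Ioc 0 1)) :
    ∀ᵐ x ∂(volume.restrict (Ioc 0 1)),
      |w x + ∫ y in (0:ℝ)..x, K (x, y) * w y| ≤ |w x| + c * ∫ y in Ioc 0 1, |w y| := by
  refine (ae_restrict_iff' measurableSet_Ioc).2 (ae_of_all _ fun x hx => ?_)
  rw [intervalIntegral.integral_of_le hx.1.le]
  exact (abs_add_le _ _).trans <| add_le_add le_rfl <|
    abs_setIntegral_mul_le_of_subset measurableSet_Ioc (Ioc_subset_Ioc_right hx.2) hc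
      (fun y hy => hK _ ⟨hy.1.le, hy.2, hx.2⟩) hw

theorem abs_sub_intervalIntegral_one_le {K : ℝ × ℝ → ℝ} {c : ℝ} (hc : 0 ≤ c)
    (hK : ∀ p ∈ Ttri, |K p| ≤ c) {w : ℝ → ℝ} (hw : IntegrableOn w (Ioc 0 1)) :
    ∀ᵐ x ∂(volume.restrict (Ioc 0 1)),
      |w x - ∫ y in x..1, K (y, x) * w y| ≤ |w x| + c * ∫ y in Ioc 0 1, |w y| := by
  refine (ae_restrict_iff' measurableSet_Ioc).2 (ae_of_all _ fun x hx => ?_)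
  rw [intervalIntegral.integral_of_le hx.2]
  exact (abs_sub _ _).trans <| add_le_add le_rfl <|
    abs_setIntegral_mul_le_of_subset measurableSet_Ioc (Ioc_subset_Ioc_left hx.1.le) hc
      (fun y hy => hK _ ⟨hx.1.le, hy.1.le, hy.2⟩) hw

/-- Bound on the (unprojected) adaptive update law
`φ(x) = γ u(x) ψ(x) / (1 + ‖w‖²)` with
`u(x) = w(x) + ∫₀ˣ l(x,y) w(y) dy`, `ψ(x) = w(x) - ∫ₓ¹ k(y,x) w(y) dy`:
`∫₀¹ |φ| ≤ γ (1 + l̄)(1 + k̄)`. -/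
theorem update_law_L1_bound (γ kBar lBar : ℝ)
    (hγ : 0 < γ) (hkBar : 0 ≤ kBar) (hlBar : 0 ≤ lBar)
    (k l : ℝ × ℝ → ℝ) (hk_meas : Measurable k) (hl_meas : Measurable l)
    (hk_bnd : ∀ p ∈ Ttri, |k p| ≤ kBar)
    (hl_bnd : ∀ p ∈ Ttri, |l p| ≤ lBar)
    (w : ℝ → ℝ) (hw : MemLp w 2 (volume.restrict (Set.Ioc (0:ℝ) 1)))
    (u ψ φ : ℝ → ℝ)
    (hu : ∀ x, u x = w x + ∫ y in (0:ℝ)..x, l (x, y) * w y)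
    (hψ : ∀ x, ψ x = w x - ∫ y in x..(1:ℝ), k (y, x) * w y)
    (hφ : ∀ x, φ x = γ * u x * ψ x / (1 + ∫ t in (0:ℝ)..1, w t ^ 2)) :
    IntervalIntegrable φ volume 0 1 ∧
    (∫ x in (0:ℝ)..1, |φ x|) ≤ γ * (1 + lBar) * (1 + kBar) := by
  set μ := volume.restrict (Ioc (0:ℝ) 1)
  have : IsProbabilityMeasure μ := ⟨by simp [μ]⟩
  have hwi : IntegrableOn w (Ioc 0 1) := hw.integrable one_le_two
  have hu_le : ∀ᵐ x ∂μ, |u x| ≤ |w x| + lBar * ∫ y, |w y| ∂μ := by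
    simpa only [hu] using abs_add_intervalIntegral_zero_le hlBar hl_bnd hwi
  have hψ_le : ∀ᵐ x ∂μ, |ψ x| ≤ |w x| + kBar * ∫ y, |w y| ∂μ := by
    simpa only [hψ] using abs_sub_intervalIntegral_one_le hkBar hk_bnd hwi
  have hu_meas : AEStronglyMeasurable u μ := funext hu ▸
    hw.1.add (aestronglyMeasurable_intervalIntegral_zero hl_meas hw.1)
  have hψ_meas : AEStronglyMeasurable ψ μ := funext hψ ▸
    hw.1.sub (aestronglyMeasurable_intervalIntegral_one hk_meas hw.1)
  obtain ⟨huψ_int, huψ_le⟩ :=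
    integral_abs_mul_le_of_abs_le hw hu_meas hψ_meas hlBar hkBar hu_le hψ_le
  set W := ∫ t in (0:ℝ)..1, w t ^ 2 with hW
  have hW_nonneg : 0 ≤ W := intervalIntegral.integral_nonneg zero_le_one fun _ _ => sq_nonneg _
  have hc : 0 < γ / (1 + W) := by positivity
  rw [show φ = fun x => γ / (1 + W) * (u x * ψ x) from funext fun x => by rw [hφ x]; ring]
  refine ⟨(intervalIntegrable_iff_integrableOn_Ioc_of_le zero_le_one).2 (huψ_int.const_mul _), ?_⟩
  rw [intervalIntegral.integral_of_le zero_le_one] at hW ⊢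
  calc ∫ x, |γ / (1 + W) * (u x * ψ x)| ∂μ = γ / (1 + W) * ∫ x, |u x * ψ x| ∂μ := by
        simp_rw [abs_mul (γ / (1 + W)), abs_of_pos hc, integral_const_mul]
    _ ≤ γ / (1 + W) * ((1 + lBar) * (1 + kBar) * W) := by rw [hW]; gcongr
    _ ≤ γ * (1 + lBar) * (1 + kBar) := by
        have hC : 0 ≤ γ * (1 + lBar) * (1 + kBar) := by positivity
        rw [div_mul_eq_mul_div, div_le_iff₀ (by positivity)]
        nlinarith
end
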